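/- arXiv:1210.5530 — 8 statements merged into one kernel-verified Lean document; each statement's English description precedes it below -/
import Mathlib

section
/- Let d ≥ 1 and let A₁,…,A_j be Hermitian traceless d×d complex matrices satisfying A_a A_b + A_b A_a = 0 for all a ≠ b and A_a² = 1 (the identity matrix) for all a. Then for every d×d density matrix ρ (positive semidefinite with trace 1) one has Σ_{a=1}^{j} (Tr(ρ A_a))² ≤ 1, i.e. the squared Euclidean norm of the vector of expectation values (⟨A₁⟩_ρ, …, ⟨A_j⟩_ρ) is at most 1. (Each Tr(ρ A_a) is a real number since ρ and A_a are Hermitian.) -/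
open scoped ComplexOrder
open scoped Matrix

lemma psd_trace_re_nonneg {n : ℕ} {N : Matrix (Fin n) (Fin n) ℂ}
    (hN : N.PosSemidef) : 0 ≤ N.trace.re := by
  have h : ∀ i, 0 ≤ (N i i).re := by
    intro i
    have := hN.re_dotProduct_nonneg (Pi.single i 1)
    simpa [dotProduct, Matrix.mulVec, Pi.single_apply, Finset.sum_ite_eq,
      Finset.sum_ite_eq'] using this
  simp only [Matrix.trace, Matrix.diag, Complex.re_sum]
  exact Finset.sum_nonneg fun i _ => h i

/-- For anticommuting Hermitian traceless square roots of the
identity `A₁, …, A_j`, the squared Euclidean norm of the vector of expectation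
values in any density matrix `ρ` is at most `1`. -/
theorem sum_sq_expectations_le_one (d j : ℕ) (hd : 1 ≤ d)
    (A : Fin j → Matrix (Fin d) (Fin d) ℂ)
    (hHerm : ∀ a, (A a).IsHermitian)
    (hTraceless : ∀ a, (A a).trace = 0)
    (hAnti : ∀ a b, a ≠ b → A a * A b + A b * A a = 0)
    (hSq : ∀ a, A a * A a = 1)
    (ρ : Matrix (Fin d) (Fin d) ℂ) (hρ : ρ.PosSemidef) (hTr : ρ.trace = 1) :
    ∑ a, ((ρ * A a).trace.re) ^ 2 ≤ 1 := by
  set t : Fin j → ℝ := fun a => (ρ * A a).trace.re with ht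
  set s : ℝ := ∑ a, t a ^ 2 with hs
  have hs0 : 0 ≤ s := Finset.sum_nonneg fun a _ => sq_nonneg _
  rcases eq_or_lt_of_le hs0 with hse | hspos
  · rw [← hse]; norm_num
  set r : ℝ := Real.sqrt s with hrdef
  have hr0 : 0 < r := Real.sqrt_pos.mpr hspos
  have hr2 : r * r = s := Real.mul_self_sqrt hs0
  set B : Matrix (Fin d) (Fin d) ℂ := ∑ a, (t a : ℂ) • A a with hBdef
  -- B is Hermitian
  have hBH : Bᴴ = B := by
    rw [hBdef, Matrix.conjTranspose_sum]
    refine Finset.sum_congr rfl fun a _ => ?_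
    rw [Matrix.conjTranspose_smul, (hHerm a).eq]
    simp
  -- B * B = s • 1
  have expand : B * B = ∑ a, ∑ b, ((t a : ℂ) * t b) • (A a * A b) := by
    rw [hBdef, Finset.sum_mul_sum]
    refine Finset.sum_congr rfl fun a _ => Finset.sum_congr rfl fun b _ => ?_
    rw [Matrix.smul_mul, Matrix.mul_smul, smul_smul]
  have expand' : B * B = ∑ a, ∑ b, ((t a : ℂ) * t b) • (A b * A a) := by
    rw [expand, Finset.sum_comm]
    exact Finset.sum_congr rfl fun a _ => Finset.sum_congr rfl fun b _ => by
      rw [mul_comm ((t a : ℂ)) ((t b : ℂ))]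
  have key : B * B + B * B = ∑ a, ∑ b, ((t a : ℂ) * t b) • (A a * A b + A b * A a) := by
    nth_rewrite 1 [expand]
    nth_rewrite 1 [expand']
    rw [← Finset.sum_add_distrib]
    refine Finset.sum_congr rfl fun a _ => ?_
    rw [← Finset.sum_add_distrib]
    exact Finset.sum_congr rfl fun b _ => (smul_add _ _ _).symm
  have key2 : B * B + B * B = ((2 * s : ℝ) : ℂ) • (1 : Matrix (Fin d) (Fin d) ℂ) := by
    rw [key]
    have : ∀ a : Fin j, (∑ b, ((t a : ℂ) * t b) • (A a * A b + A b * A a))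
        = ((2 * t a ^ 2 : ℝ) : ℂ) • (1 : Matrix (Fin d) (Fin d) ℂ) := by
      intro a
      rw [Finset.sum_eq_single a]
      · rw [hSq a]
        push_cast
        match_scalars
        ring
      · intro b _ hb
        rw [hAnti a b (Ne.symm hb), smul_zero]
      · intro h; exact absurd (Finset.mem_univ a) h
    rw [Finset.sum_congr rfl fun a _ => this a, ← Finset.sum_smul]
    congr 1
    rw [hs]
    push_cast
    rw [Finset.mul_sum]
  have hBB : B * B = ((s : ℝ) : ℂ) • (1 : Matrix (Fin d) (Fin d) ℂ) := by
    have h2 : B * B = (2 : ℂ)⁻¹ • (B * B + B * B) := by module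
    rw [h2, key2, smul_smul]
    congr 1
    push_cast
    ring
  set M : Matrix (Fin d) (Fin d) ℂ := ((r : ℝ) : ℂ) • 1 - B with hMdef
  have hMH : Mᴴ = M := by
    rw [hMdef, Matrix.conjTranspose_sub, Matrix.conjTranspose_smul, hBH]
    simp
  have hMM : M * M = ((2 * r : ℝ) : ℂ) • M := by
    have hrc : (r : ℂ) * r = (s : ℂ) := by exact_mod_cast congrArg Complex.ofReal hr2
    have expandM : M * M
        = ((r:ℂ) * (r:ℂ)) • (1 : Matrix (Fin d) (Fin d) ℂ) - ((2:ℂ) * (r:ℂ)) • B + B * B := by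
      rw [hMdef]
      simp only [sub_mul, mul_sub, Matrix.smul_mul, Matrix.mul_smul, one_mul, mul_one,
        smul_smul]
      module
    have hsq : (r : ℂ) ^ 2 = (s : ℂ) := by rw [sq]; exact hrc
    rw [expandM, hBB, hMdef]
    match_scalars <;> push_cast
    · linear_combination (-1 : ℂ) * hsq
    · ring
  have h0 : 0 ≤ (M * ρ * Mᴴ).trace.re := psd_trace_re_nonneg (hρ.mul_mul_conjTranspose_same M)
  have htr1 : (M * ρ * Mᴴ).trace = ((2 * r : ℝ) : ℂ) * (M * ρ).trace := by
    rw [hMH, Matrix.trace_mul_cycle, hMM, Matrix.smul_mul, Matrix.trace_smul]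
    simp
  have htrMρ : (M * ρ).trace = ((r : ℝ) : ℂ) - ∑ a, (t a : ℂ) * (ρ * A a).trace := by
    rw [hMdef, Matrix.sub_mul, Matrix.trace_sub, Matrix.smul_mul, one_mul,
      Matrix.trace_smul, hTr, smul_eq_mul, mul_one, hBdef, Finset.sum_mul, Matrix.trace_sum]
    simp only [Matrix.smul_mul, Matrix.trace_smul, smul_eq_mul]
    congr 1
    exact Finset.sum_congr rfl fun a _ => by rw [Matrix.trace_mul_comm]
  have hre : (M * ρ).trace.re = r - s := by
    rw [htrMρ]
    simp only [Complex.sub_re, Complex.ofReal_re, Complex.re_sum]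
    congr 1
    rw [hs]
    refine Finset.sum_congr rfl fun a _ => ?_
    rw [Complex.re_ofReal_mul]
    simp only [ht]
    ring
  have hfin : 0 ≤ 2 * r * (r - s) := by
    have := h0
    rw [htr1] at this
    rw [Complex.re_ofReal_mul, hre] at this
    linarith
  have hsr : s ≤ r := by nlinarith
  nlinarith
end

section
/- Monogamy relation (5): Let n ≥ 2, let ρ be an n-qubit density matrix, and let k ≠ l be two qubits. Then M_{kl}(ρ) = Σ_{i,j∈{1,2}} (T^{kl}_{ij}(ρ))² ≤ 2, i.e. the sum of the squares of the four two-body correlations T^{kl}_{11}, T^{kl}_{12}, T^{kl}_{21}, T^{kl}_{22} is at most 2. -/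
noncomputable def pauli : ℕ → Matrix (Fin 2) (Fin 2) ℂ
  | 1 => !![0, 1; 1, 0]
  | 2 => !![0, -Complex.I; Complex.I, 0]
  | 3 => !![1, 0; 0, -1]
  | _ => 1

/-- The `ι`-fold Kronecker product of single-qubit operators `pauli (f k)`. -/
noncomputable def kronOp {ι : Type*} [Fintype ι] [DecidableEq ι] (f : ι → ℕ) :
    Matrix (ι → Fin 2) (ι → Fin 2) ℂ :=
  Matrix.of fun x y => ∏ k, pauli (f k) (x k) (y k)

/-- Two-body correlation `T^{kl}_{ij}(ρ)`. -/
noncomputable def corr {ι : Type*} [Fintype ι] [DecidableEq ι]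
    (ρ : Matrix (ι → Fin 2) (ι → Fin 2) ℂ) (k l : ι) (i j : ℕ) : ℝ :=
  ((ρ * kronOp (fun q => if q = k then i else if q = l then j else 0)).trace).re

/-- Single-qubit Bloch vector component `b^{(q)}_i(ρ)`. -/
noncomputable def bloch {ι : Type*} [Fintype ι] [DecidableEq ι]
    (ρ : Matrix (ι → Fin 2) (ι → Fin 2) ℂ) (q : ι) (i : ℕ) : ℝ :=
  ((ρ * kronOp (fun p => if p = q then i else 0)).trace).re

/-- `M_{kl}(ρ)`. -/
noncomputable def Mkl {ι : Type*} [Fintype ι] [DecidableEq ι]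
    (ρ : Matrix (ι → Fin 2) (ι → Fin 2) ℂ) (k l : ι) : ℝ :=
  ∑ i ∈ Finset.Icc 1 2, ∑ j ∈ Finset.Icc 1 2, (corr ρ k l i j) ^ 2

/-- `M(ρ) = Σ_{k<l} M_{kl}(ρ)`. -/
noncomputable def Mtot {ι : Type*} [Fintype ι] [LinearOrder ι]
    (ρ : Matrix (ι → Fin 2) (ι → Fin 2) ℂ) : ℝ :=
  ∑ p ∈ Finset.univ.filter (fun p : ι × ι => p.1 < p.2), Mkl ρ p.1 p.2

/-- Density matrix of a pure state `ψ`: `ρ_ψ = ψ ψ†`. -/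
noncomputable def pureDensity {ι : Type*} [Fintype ι] [DecidableEq ι]
    (ψ : (ι → Fin 2) → ℂ) : Matrix (ι → Fin 2) (ι → Fin 2) ℂ :=
  Matrix.of fun x y => ψ x * (starRingEnd ℂ) (ψ y)

/-- `ψ` is a unit vector. -/
def UnitVec {ι : Type*} [Fintype ι] [DecidableEq ι] (ψ : (ι → Fin 2) → ℂ) : Prop :=
  ∑ x, Complex.normSq (ψ x) = 1

/-- Preferred-basis condition: all transverse Bloch components vanish. -/
def PreferredBasis {ι : Type*} [Fintype ι] [DecidableEq ι]
    (ρ : Matrix (ι → Fin 2) (ι → Fin 2) ℂ) : Prop :=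
  ∀ q : ι, bloch ρ q 1 = 0 ∧ bloch ρ q 2 = 0

open scoped ComplexOrder

namespace MG
open Matrix
set_option linter.unusedSectionVars false
variable {ι : Type*} [Fintype ι] [DecidableEq ι]

noncomputable def kron (M : ι → Matrix (Fin 2) (Fin 2) ℂ) :
    Matrix (ι → Fin 2) (ι → Fin 2) ℂ :=
  Matrix.of fun x y => ∏ k, M k (x k) (y k)

lemma kronOp_eq (f : ι → ℕ) : kronOp f = kron (fun k => pauli (f k)) := rfl

lemma kron_mul (M N : ι → Matrix (Fin 2) (Fin 2) ℂ) :
    kron M * kron N = kron (fun k => M k * N k) := by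
  ext x y
  simp only [kron, Matrix.mul_apply, Matrix.of_apply]
  rw [show (fun k => ∑ j, M k (x k) j * N k j (y k)) = fun k => ∑ j ∈ Finset.univ, M k (x k) j * N k j (y k) from rfl]
  conv_rhs => rw [Finset.prod_univ_sum]
  rw [Fintype.piFinset_univ]
  simp [Finset.prod_mul_distrib]

lemma trace_kron (M : ι → Matrix (Fin 2) (Fin 2) ℂ) :
    (kron M).trace = ∏ k, (M k).trace := by
  simp only [Matrix.trace, Matrix.diag, kron, Matrix.of_apply]
  conv_rhs => rw [Finset.prod_univ_sum (fun _ => Finset.univ)]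
  rw [Fintype.piFinset_univ]

lemma kron_one : kron (fun _ : ι => (1 : Matrix (Fin 2) (Fin 2) ℂ)) = 1 := by
  ext x y
  by_cases h : x = y
  · subst h; simp [kron, Matrix.one_apply]
  · obtain ⟨q, hq⟩ := Function.ne_iff.mp h
    rw [kron, Matrix.of_apply, Matrix.one_apply_ne h, Finset.prod_eq_zero (Finset.mem_univ q)]
    simp [Matrix.one_apply, hq]

lemma kron_smul (M N : ι → Matrix (Fin 2) (Fin 2) ℂ) (c : ι → ℂ)
    (h : ∀ q, M q = c q • N q) :
    kron M = (∏ q, c q) • kron N := by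
  ext x y
  simp only [kron, Matrix.of_apply, Matrix.smul_apply, smul_eq_mul, h, ← Finset.prod_mul_distrib]

lemma kron_conjTranspose (M : ι → Matrix (Fin 2) (Fin 2) ℂ) :
    (kron M)ᴴ = kron (fun q => (M q)ᴴ) := by
  ext x y
  simp [kron, Matrix.conjTranspose_apply, map_prod]

lemma pauli_herm : ∀ m : ℕ, (pauli m)ᴴ = pauli m := by
  intro m
  match m with
  | 0 => simp [pauli]
  | 1 => ext i j; fin_cases i <;> fin_cases j <;> simp [pauli]
  | 2 => ext i j; fin_cases i <;> fin_cases j <;> simp [pauli]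
  | 3 => ext i j; fin_cases i <;> fin_cases j <;> simp [pauli]
  | (n+4) => simp [pauli]

lemma pauli_zero : pauli 0 = 1 := rfl

lemma p11 : pauli 1 * pauli 1 = (1:ℂ) • pauli 0 := by
  ext i j; fin_cases i <;> fin_cases j <;> simp [pauli, Matrix.mul_apply, Fin.sum_univ_two]

lemma p22 : pauli 2 * pauli 2 = (1:ℂ) • pauli 0 := by
  ext i j; fin_cases i <;> fin_cases j <;>
    simp [pauli, Matrix.mul_apply, Fin.sum_univ_two, Complex.I_mul_I]

lemma p33 : pauli 3 * pauli 3 = (1:ℂ) • pauli 0 := by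
  ext i j; fin_cases i <;> fin_cases j <;> simp [pauli, Matrix.mul_apply, Fin.sum_univ_two]

lemma p12 : pauli 1 * pauli 2 = Complex.I • pauli 3 := by
  ext i j; fin_cases i <;> fin_cases j <;> simp [pauli, Matrix.mul_apply, Fin.sum_univ_two]

lemma p21 : pauli 2 * pauli 1 = (-Complex.I) • pauli 3 := by
  ext i j; fin_cases i <;> fin_cases j <;> simp [pauli, Matrix.mul_apply, Fin.sum_univ_two]

lemma p00 : pauli 0 * pauli 0 = (1:ℂ) • pauli 0 := by simp [pauli]


lemma trace_conjT_mul {m : Type*} [Fintype m] (X Y : Matrix m m ℂ) :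
    (Xᴴ * Y).trace = ∑ p : m × m, (starRingEnd ℂ) (X p.1 p.2) * Y p.1 p.2 := by
  rw [Fintype.sum_prod_type]
  simp only [Matrix.trace, Matrix.mul_apply, Matrix.conjTranspose_apply, Matrix.diag]
  rw [Finset.sum_comm]
  rfl

open scoped ComplexOrder in
lemma trace_sq_le {m : Type*} [Fintype m]
    (ρ B : Matrix m m ℂ) (hρ : ρ.PosSemidef) (hB : Bᴴ = B) :
    ((ρ * B).trace.re)^2 ≤ (ρ.trace.re) * ((ρ * (B * B)).trace.re) := by
  classical
  open scoped MatrixOrder in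
  obtain ⟨C, rfl⟩ := CStarAlgebra.nonneg_iff_eq_star_mul_self.mp hρ.nonneg
  have e1 : (Cᴴ * C * B).trace = (Cᴴ * (C * B)).trace := by rw [mul_assoc]
  have e2 : (Cᴴ * C).trace.re = ∑ p : m × m, (‖C p.1 p.2‖)^2 := by
    rw [trace_conjT_mul]
    rw [Complex.re_sum]
    congr 1; ext p
    rw [mul_comm, Complex.mul_conj, Complex.ofReal_re, Complex.normSq_eq_norm_sq]
  have e3 : (Cᴴ * C * (B * B)).trace.re = ∑ p : m × m, (‖(C * B) p.1 p.2‖)^2 := by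
    have h : ((C * B)ᴴ * (C * B)).trace = (Cᴴ * C * (B * B)).trace := by
      rw [Matrix.conjTranspose_mul, hB, show B * Cᴴ * (C * B) = B * (Cᴴ * C * B) by
        simp [mul_assoc], Matrix.trace_mul_comm, mul_assoc, mul_assoc]
    rw [← h, trace_conjT_mul, Complex.re_sum]
    congr 1; ext p
    rw [mul_comm, Complex.mul_conj, Complex.ofReal_re, Complex.normSq_eq_norm_sq]
  have habs : ‖(Cᴴ * C * B).trace‖
      ≤ ∑ p : m × m, ‖C p.1 p.2‖ * ‖(C * B) p.1 p.2‖ := by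
    rw [e1, trace_conjT_mul]
    refine (norm_sum_le _ _).trans_eq ?_
    refine Finset.sum_congr rfl fun p _ => ?_
    rw [norm_mul, Complex.norm_conj]
  have hcs := Finset.sum_mul_sq_le_sq_mul_sq Finset.univ
    (fun p : m × m => ‖C p.1 p.2‖) (fun p => ‖(C * B) p.1 p.2‖)
  have h0 : ((Cᴴ * C * B).trace.re)^2 ≤ (‖(Cᴴ * C * B).trace‖)^2 := by
    rw [← sq_abs]
    exact pow_le_pow_left₀ (abs_nonneg _) (Complex.abs_re_le_norm _) 2
  calc ((Cᴴ * C * B).trace.re)^2 ≤ (‖(Cᴴ * C * B).trace‖)^2 := h0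
    _ ≤ (∑ p : m × m, ‖C p.1 p.2‖ * ‖(C * B) p.1 p.2‖)^2 := by
        apply pow_le_pow_left₀ (norm_nonneg _) habs
    _ ≤ (∑ p : m × m, (‖C p.1 p.2‖)^2) *
        (∑ p : m × m, (‖(C * B) p.1 p.2‖)^2) := hcs
    _ = (Cᴴ * C).trace.re * (Cᴴ * C * (B * B)).trace.re := by rw [e2, e3]
def g (k l : ι) (i j : ℕ) : ι → ℕ := fun q => if q = k then i else if q = l then j else 0

lemma A_herm (f : ι → ℕ) : (kronOp f)ᴴ = kronOp f := by
  rw [kronOp_eq, kron_conjTranspose]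
  simp [pauli_herm]

lemma A00 (k l : ι) : kronOp (g k l 0 0) = 1 := by
  rw [kronOp_eq, show (fun q => pauli (g k l 0 0 q)) = fun _ : ι => (1 : Matrix (Fin 2) (Fin 2) ℂ)
    from funext fun q => by simp [g, pauli_zero], kron_one]

lemma A_mul (k l : ι) (hkl : k ≠ l) (i j i' j' i'' j'' : ℕ) (c d : ℂ)
    (hk : pauli i * pauli i' = c • pauli i'') (hl : pauli j * pauli j' = d • pauli j'') :
    kronOp (g k l i j) * kronOp (g k l i' j') = (c * d) • kronOp (g k l i'' j'') := by
  rw [kronOp_eq, kronOp_eq, kron_mul, kronOp_eq,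
    kron_smul _ _ (fun q => if q = k then c else if q = l then d else 1) ?_]
  · congr 1
    rw [← Finset.prod_subset (Finset.subset_univ ({k, l} : Finset ι))
      (fun q _ hq => by
        simp only [Finset.mem_insert, Finset.mem_singleton, not_or] at hq
        simp [hq.1, hq.2])]
    rw [Finset.prod_pair hkl]
    simp [hkl, Ne.symm hkl]
  · intro q
    by_cases hq : q = k
    · subst hq; simp [g, hkl, hk]
    · by_cases hq' : q = l
      · subst hq'; simp [g, hq, hl]
      · simp [g, hq, hq', pauli_zero]

lemma real_arith (a b c d T : ℝ) (hT2 : T ^ 2 ≤ 1)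
    (key : (a ^ 2 + b ^ 2 + c ^ 2 + d ^ 2) ^ 2
      ≤ (a ^ 2 + b ^ 2 + c ^ 2 + d ^ 2) + 2 * (b * c - a * d) * T) :
    a ^ 2 + b ^ 2 + c ^ 2 + d ^ 2 ≤ 2 := by
  set S : ℝ := a ^ 2 + b ^ 2 + c ^ 2 + d ^ 2 with hS
  have hT1 : T ≤ 1 := by nlinarith [sq_nonneg (T - 1)]
  have hT1' : -1 ≤ T := by nlinarith [sq_nonneg (T + 1)]
  have hX1 : 2 * (b * c - a * d) ≤ S := by nlinarith [sq_nonneg (b - c), sq_nonneg (a + d)]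
  have hX2 : -S ≤ 2 * (b * c - a * d) := by nlinarith [sq_nonneg (b + c), sq_nonneg (a - d)]
  have hS0 : 0 ≤ S := by positivity
  have hXT : 2 * (b * c - a * d) * T ≤ S := by
    nlinarith [mul_nonneg (by linarith : (0:ℝ) ≤ S - 2 * (b * c - a * d))
        (by linarith : (0:ℝ) ≤ 1 + T),
      mul_nonneg (by linarith : (0:ℝ) ≤ S + 2 * (b * c - a * d))
        (by linarith : (0:ℝ) ≤ 1 - T)]
  nlinarith [sq_nonneg (S - 2)]

end MG

set_option maxHeartbeats 1000000 in
open MG Matrix in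
open scoped ComplexOrder in
/-- Monogamy relation (5): for any `n`-qubit density matrix
`M_{kl}(ρ) ≤ 2`. -/
theorem Mkl_le_two (n : ℕ) (hn : 2 ≤ n)
    (ρ : Matrix (Fin n → Fin 2) (Fin n → Fin 2) ℂ)
    (hρ : ρ.PosSemidef) (hTr : ρ.trace = 1)
    (k l : Fin n) (hkl : k ≠ l) :
    Mkl ρ k l ≤ 2 := by
  classical
  set t : ℕ → ℕ → ℝ := fun i j => corr ρ k l i j with ht
  have hcorr : ∀ i j, (ρ * kronOp (g k l i j)).trace.re = t i j := fun i j => rfl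
  set B : Matrix (Fin n → Fin 2) (Fin n → Fin 2) ℂ :=
    (t 1 1 : ℂ) • kronOp (g k l 1 1) + (t 1 2 : ℂ) • kronOp (g k l 1 2)
      + (t 2 1 : ℂ) • kronOp (g k l 2 1) + (t 2 2 : ℂ) • kronOp (g k l 2 2) with hB
  have hBH : Bᴴ = B := by
    rw [hB]
    simp [Matrix.conjTranspose_add, Matrix.conjTranspose_smul, A_herm, Complex.conj_ofReal]
  have hM : Mkl ρ k l = t 1 1 ^ 2 + t 1 2 ^ 2 + t 2 1 ^ 2 + t 2 2 ^ 2 := by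
    rw [Mkl, show Finset.Icc 1 2 = ({1, 2} : Finset ℕ) by rfl]
    rw [Finset.sum_pair (by norm_num : (1:ℕ) ≠ 2),
      Finset.sum_pair (by norm_num : (1:ℕ) ≠ 2),
      Finset.sum_pair (by norm_num : (1:ℕ) ≠ 2)]
    simp only [ht]
    ring
  have m1111 := A_mul k l hkl 1 1 1 1 0 0 1 1 p11 p11
  have m1112 := A_mul k l hkl 1 1 1 2 0 3 1 Complex.I p11 p12
  have m1121 := A_mul k l hkl 1 1 2 1 3 0 Complex.I 1 p12 p11
  have m1122 := A_mul k l hkl 1 1 2 2 3 3 Complex.I Complex.I p12 p12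
  have m1211 := A_mul k l hkl 1 2 1 1 0 3 1 (-Complex.I) p11 p21
  have m1212 := A_mul k l hkl 1 2 1 2 0 0 1 1 p11 p22
  have m1221 := A_mul k l hkl 1 2 2 1 3 3 Complex.I (-Complex.I) p12 p21
  have m1222 := A_mul k l hkl 1 2 2 2 3 0 Complex.I 1 p12 p22
  have m2111 := A_mul k l hkl 2 1 1 1 3 0 (-Complex.I) 1 p21 p11
  have m2112 := A_mul k l hkl 2 1 1 2 3 3 (-Complex.I) Complex.I p21 p12
  have m2121 := A_mul k l hkl 2 1 2 1 0 0 1 1 p22 p11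
  have m2122 := A_mul k l hkl 2 1 2 2 0 3 1 Complex.I p22 p12
  have m2211 := A_mul k l hkl 2 2 1 1 3 3 (-Complex.I) (-Complex.I) p21 p21
  have m2212 := A_mul k l hkl 2 2 1 2 3 0 (-Complex.I) 1 p21 p22
  have m2221 := A_mul k l hkl 2 2 2 1 0 3 1 (-Complex.I) p22 p21
  have m2222 := A_mul k l hkl 2 2 2 2 0 0 1 1 p22 p22
  have m3333 := A_mul k l hkl 3 3 3 3 0 0 1 1 p33 p33
  have hA00 : kronOp (g k l 0 0) = (1 : Matrix (Fin n → Fin 2) (Fin n → Fin 2) ℂ) := A00 k l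
  rw [hA00] at m1111 m1212 m2121 m2222 m3333
  have hB2 : B * B
      = ((t 1 1 ^ 2 + t 1 2 ^ 2 + t 2 1 ^ 2 + t 2 2 ^ 2 : ℝ) : ℂ)
          • (1 : Matrix (Fin n → Fin 2) (Fin n → Fin 2) ℂ)
        + ((2 * (t 1 2 * t 2 1 - t 1 1 * t 2 2) : ℝ) : ℂ) • kronOp (g k l 3 3) := by
    rw [hB]
    simp only [add_mul, mul_add, smul_mul_assoc, mul_smul_comm, smul_smul,
      m1111, m1112, m1121, m1122, m1211, m1212, m1221, m1222,
      m2111, m2112, m2121, m2122, m2211, m2212, m2221, m2222]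
    push_cast
    match_scalars <;> simp [Complex.I_sq] <;> ring
  set T : ℝ := (ρ * kronOp (g k l 3 3)).trace.re with hT
  have hTrRe : ρ.trace.re = 1 := by rw [hTr]; simp
  have hT2 : T ^ 2 ≤ 1 := by
    have h := trace_sq_le ρ (kronOp (g k l 3 3)) hρ (A_herm _)
    rw [m3333] at h
    simpa [hTrRe, hTr] using h
  have hTrB : (ρ * B).trace.re
      = t 1 1 ^ 2 + t 1 2 ^ 2 + t 2 1 ^ 2 + t 2 2 ^ 2 := by
    rw [hB]
    simp only [Matrix.mul_add, Matrix.mul_smul, Matrix.trace_add, Matrix.trace_smul,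
      smul_eq_mul]
    simp only [Complex.add_re, Complex.mul_re, Complex.ofReal_re, Complex.ofReal_im,
      zero_mul, sub_zero]
    simp only [hcorr]
    ring
  have hTrB2 : (ρ * (B * B)).trace.re
      = (t 1 1 ^ 2 + t 1 2 ^ 2 + t 2 1 ^ 2 + t 2 2 ^ 2)
        + 2 * (t 1 2 * t 2 1 - t 1 1 * t 2 2) * T := by
    rw [hB2]
    simp only [Matrix.mul_add, Matrix.mul_smul, Matrix.trace_add, Matrix.trace_smul,
      Matrix.mul_one, smul_eq_mul, hTr, mul_one]
    simp only [Complex.add_re, Complex.mul_re, Complex.ofReal_re, Complex.ofReal_im,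
      zero_mul, sub_zero, Complex.one_re, mul_one, hT]
  have key := trace_sq_le ρ B hρ hBH
  rw [hTrB, hTrB2, hTrRe, one_mul] at key
  rw [hM]
  exact real_arith _ _ _ _ T hT2 key
end

section
/- Monogamy relation (6): Let n ≥ 3, let ρ be an n-qubit density matrix, and let k, l, m be pairwise distinct qubits. Then M_{kl}(ρ) + M_{lm}(ρ) ≤ 2, where M_{kl}(ρ) = Σ_{i,j∈{1,2}} (T^{kl}_{ij}(ρ))². -/
open scoped ComplexOrder

/-! ### Auxiliary lemmas -/

open Matrix

section PauliLemmas

@[simp] lemma pauli_zero : pauli 0 = 1 := rfl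

lemma pauli_mul_self (i : ℕ) : pauli i * pauli i = 1 := by
  match i with
  | 0 => simp [pauli]
  | 1 => ext a b; fin_cases a <;> fin_cases b <;>
      simp [pauli, Matrix.mul_apply, Fin.sum_univ_two, Matrix.one_apply]
  | 2 => ext a b; fin_cases a <;> fin_cases b <;>
      simp [pauli, Matrix.mul_apply, Fin.sum_univ_two, Matrix.one_apply, Complex.I_mul_I]
  | 3 => ext a b; fin_cases a <;> fin_cases b <;>
      simp [pauli, Matrix.mul_apply, Fin.sum_univ_two, Matrix.one_apply]
  | (n+4) => simp [pauli]

lemma pauli_herm (i : ℕ) : (pauli i)ᴴ = pauli i := by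
  match i with
  | 0 => simp [pauli]
  | 1 => ext a b; fin_cases a <;> fin_cases b <;> simp [pauli]
  | 2 => ext a b; fin_cases a <;> fin_cases b <;> simp [pauli]
  | 3 => ext a b; fin_cases a <;> fin_cases b <;> simp [pauli]
  | (n+4) => simp [pauli]

lemma pauli12 : pauli 1 * pauli 2 = -(pauli 2 * pauli 1) := by
  ext a b; fin_cases a <;> fin_cases b <;> simp [pauli, Matrix.mul_apply, Fin.sum_univ_two]

lemma pauli21 : pauli 2 * pauli 1 = -(pauli 1 * pauli 2) := by rw [pauli12, neg_neg]

lemma pauli_comm_of (i j : ℕ) (h : i = j ∨ i = 0 ∨ j = 0) :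
    pauli i * pauli j = pauli j * pauli i := by
  rcases h with h | h | h <;> subst h <;> simp

end PauliLemmas

section KronLemmas

variable {ι : Type*} [Fintype ι] [DecidableEq ι]

noncomputable def kron (M : ι → Matrix (Fin 2) (Fin 2) ℂ) :
    Matrix (ι → Fin 2) (ι → Fin 2) ℂ :=
  Matrix.of fun x y => ∏ k, M k (x k) (y k)

lemma kronOp_eq (f : ι → ℕ) : kronOp f = kron (fun k => pauli (f k)) := rfl

lemma kron_mul (M N : ι → Matrix (Fin 2) (Fin 2) ℂ) :
    kron M * kron N = kron (fun k => M k * N k) := by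
  ext x y
  simp only [kron, Matrix.mul_apply, Matrix.of_apply]
  rw [show (∏ k, (∑ a, M k (x k) a * N k a (y k))) = _ from
    Finset.prod_univ_sum (fun _ => (Finset.univ : Finset (Fin 2)))
      (fun k a => M k (x k) a * N k a (y k))]
  rw [Fintype.piFinset_univ]
  exact Finset.sum_congr rfl fun z _ => Finset.prod_mul_distrib.symm

lemma kron_one : kron (fun _ : ι => (1 : Matrix (Fin 2) (Fin 2) ℂ)) = 1 := by
  ext x y
  by_cases h : x = y
  · subst h; simp [kron, Matrix.one_apply]
  · obtain ⟨q, hq⟩ := Function.ne_iff.mp h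
    simp only [kron, Matrix.of_apply]
    rw [Finset.prod_eq_zero (Finset.mem_univ q) (by simp [Matrix.one_apply, hq]),
      Matrix.one_apply_ne h]

lemma kron_conjTranspose (M : ι → Matrix (Fin 2) (Fin 2) ℂ) :
    (kron M)ᴴ = kron (fun k => (M k)ᴴ) := by
  ext x y
  simp [kron, Matrix.conjTranspose_apply, map_prod]

lemma kron_eq_neg (M N : ι → Matrix (Fin 2) (Fin 2) ℂ) (q0 : ι)
    (h0 : M q0 * N q0 = -(N q0 * M q0)) (h : ∀ q ≠ q0, M q * N q = N q * M q) :
    kron (fun q => M q * N q) = -kron (fun q => N q * M q) := by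
  ext x y
  simp only [kron, Matrix.of_apply, Matrix.neg_apply]
  rw [← Finset.prod_erase_mul _ _ (Finset.mem_univ q0),
      ← Finset.prod_erase_mul _ _ (Finset.mem_univ q0)]
  rw [Finset.prod_congr rfl (fun q hq => by
    rw [h q (Finset.ne_of_mem_erase hq)]), h0]
  simp only [Matrix.neg_apply]
  ring

lemma kronOp_mul_self (f : ι → ℕ) : kronOp f * kronOp f = 1 := by
  rw [kronOp_eq, kron_mul]
  rw [show (fun k => pauli (f k) * pauli (f k)) = (fun _ : ι => (1 : Matrix (Fin 2) (Fin 2) ℂ))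
    from funext fun k => pauli_mul_self (f k)]
  exact kron_one

lemma kronOp_herm (f : ι → ℕ) : (kronOp f)ᴴ = kronOp f := by
  rw [kronOp_eq, kron_conjTranspose]
  exact congrArg kron (funext fun k => pauli_herm (f k))

lemma kronOp_anticomm (f g : ι → ℕ) (q0 : ι)
    (h0 : pauli (f q0) * pauli (g q0) = -(pauli (g q0) * pauli (f q0)))
    (h : ∀ q ≠ q0, pauli (f q) * pauli (g q) = pauli (g q) * pauli (f q)) :
    kronOp f * kronOp g = -(kronOp g * kronOp f) := by
  rw [kronOp_eq f, kronOp_eq g, kron_mul, kron_mul]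
  exact kron_eq_neg _ _ q0 h0 h

end KronLemmas

section CS

lemma trace_hermitian_prod {α : Type*} [Fintype α] [DecidableEq α] (X : Matrix α α ℂ) :
    (Xᴴ * X).trace = ((∑ p : α × α, ‖X p.2 p.1‖ ^ 2 : ℝ) : ℂ) := by
  simp only [Matrix.trace, Matrix.diag, Matrix.mul_apply, Matrix.conjTranspose_apply]
  rw [← Fintype.sum_prod_type']
  push_cast
  refine Finset.sum_congr rfl fun p _ => ?_
  rw [mul_comm, Complex.star_def, Complex.mul_conj, Complex.normSq_eq_norm_sq]
  push_cast; ring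

lemma trace_cs {α : Type*} [Fintype α] [DecidableEq α] (X Y : Matrix α α ℂ) :
    Complex.normSq ((Xᴴ * Y).trace) ≤ (Xᴴ * X).trace.re * (Yᴴ * Y).trace.re := by
  have hs : (Xᴴ * Y).trace = ∑ p : α × α, star (X p.2 p.1) * Y p.2 p.1 := by
    simp only [Matrix.trace, Matrix.diag, Matrix.mul_apply, Matrix.conjTranspose_apply]
    rw [← Fintype.sum_prod_type']
  rw [hs, trace_hermitian_prod X, trace_hermitian_prod Y, Complex.ofReal_re, Complex.ofReal_re]
  have h1 : ‖∑ p : α × α, star (X p.2 p.1) * Y p.2 p.1‖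
      ≤ ∑ p : α × α, ‖X p.2 p.1‖ * ‖Y p.2 p.1‖ := by
    refine (norm_sum_le _ _).trans_eq ?_
    exact Finset.sum_congr rfl fun p _ => by rw [norm_mul, norm_star]
  have h2 : (∑ p : α × α, ‖X p.2 p.1‖ * ‖Y p.2 p.1‖) ^ 2
      ≤ (∑ p : α × α, ‖X p.2 p.1‖ ^ 2) * ∑ p : α × α, ‖Y p.2 p.1‖ ^ 2 :=
    Finset.sum_mul_sq_le_sq_mul_sq _ _ _
  have h4 : Complex.normSq (∑ p : α × α, star (X p.2 p.1) * Y p.2 p.1)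
      = ‖∑ p : α × α, star (X p.2 p.1) * Y p.2 p.1‖ ^ 2 := by
    rw [Complex.sq_norm]
  rw [h4]
  exact le_trans (pow_le_pow_left₀ (norm_nonneg _) h1 2) h2

end CS

section Quad

lemma quad_bound {α : Type*} [Fintype α] [DecidableEq α]
    (ρ : Matrix α α ℂ) (hρ : ρ.PosSemidef) (hTr : ρ.trace = 1)
    (A : Fin 4 → Matrix α α ℂ)
    (hH : ∀ a, (A a)ᴴ = A a)
    (hsq : ∀ a, A a * A a = 1)
    (hanti : ∀ a b, a ≠ b → A a * A b = -(A b * A a)) :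
    ∑ a, ((ρ * A a).trace.re) ^ 2 ≤ 1 := by
  set t : Fin 4 → ℝ := fun a => (ρ * A a).trace.re with ht
  set c : ℝ := ∑ a, t a ^ 2 with hc
  have hc0 : 0 ≤ c := Finset.sum_nonneg fun a _ => sq_nonneg _
  set B : Matrix α α ℂ := ∑ a, (t a : ℂ) • A a with hB
  have hB2 : B * B = (c : ℂ) • 1 := by
    have expand : B * B = ∑ p ∈ (Finset.univ : Finset (Fin 4)) ×ˢ Finset.univ,
        ((t p.1 : ℂ) * (t p.2 : ℂ)) • (A p.1 * A p.2) := by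
      rw [hB, Finset.sum_mul_sum]
      rw [Finset.sum_product]
      exact Finset.sum_congr rfl fun a _ => Finset.sum_congr rfl fun b _ => by
        rw [Matrix.smul_mul, Matrix.mul_smul, smul_smul]
    have hsplit : (Finset.univ : Finset (Fin 4)) ×ˢ Finset.univ
        = Finset.univ.diag ∪ Finset.univ.offDiag := (Finset.diag_union_offDiag _).symm
    rw [expand, hsplit, Finset.sum_union (Finset.disjoint_diag_offDiag _)]
    have hdiag : ∑ p ∈ (Finset.univ : Finset (Fin 4)).diag,
        ((t p.1 : ℂ) * (t p.2 : ℂ)) • (A p.1 * A p.2) = (c : ℂ) • 1 := by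
      rw [Finset.sum_diag]
      have : ∀ a : Fin 4, ((t a : ℂ) * (t a : ℂ)) • (A a * A a) = ((t a ^ 2 : ℝ) : ℂ) • 1 := by
        intro a; rw [hsq a]; push_cast; ring_nf
      rw [Finset.sum_congr rfl fun a _ => this a, ← Finset.sum_smul]
      congr 1
      push_cast [hc]
      ring
    have hoff : ∑ p ∈ (Finset.univ : Finset (Fin 4)).offDiag,
        ((t p.1 : ℂ) * (t p.2 : ℂ)) • (A p.1 * A p.2) = 0 := by
      refine Finset.sum_involution (fun p _ => p.swap) ?_ ?_ ?_ ?_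
      · intro p hp
        have hne : p.1 ≠ p.2 := (Finset.mem_offDiag.mp hp).2.2
        simp only [Prod.fst_swap, Prod.snd_swap]
        rw [hanti p.1 p.2 hne]
        rw [smul_neg]
        ring_nf
        rw [mul_comm (t p.1 : ℂ) (t p.2 : ℂ)]
        abel
      · intro p hp _
        have hne : p.1 ≠ p.2 := (Finset.mem_offDiag.mp hp).2.2
        exact fun h => hne ((Prod.ext_iff.mp h).1.symm)
      · intro p hp
        have h := Finset.mem_offDiag.mp hp
        exact Finset.mem_offDiag.mpr ⟨h.2.1, h.1, h.2.2.symm⟩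
      · intro p _; rfl
    rw [hdiag, hoff, add_zero]
  have hBH : Bᴴ = B := by
    rw [hB, Matrix.conjTranspose_sum]
    exact Finset.sum_congr rfl fun a _ => by
      rw [Matrix.conjTranspose_smul, hH a, Complex.star_def, Complex.conj_ofReal]
  have hre : ((ρ * B).trace).re = c := by
    rw [hB, Matrix.mul_sum, Matrix.trace_sum]
    rw [Complex.re_sum]
    refine Finset.sum_congr rfl fun a _ => ?_
    rw [Matrix.mul_smul, Matrix.trace_smul, smul_eq_mul, Complex.re_ofReal_mul, sq]
  open scoped MatrixOrder Matrix.Norms.L2Operator in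
  obtain ⟨S, hSsa, -, hSS'⟩ :=
    sub_zero ρ ▸ CFC.exists_sqrt_of_isSelfAdjoint_of_quasispectrumRestricts hρ.isHermitian
      (QuasispectrumRestricts.nnreal_of_nonneg hρ.nonneg)
  have hSH : Sᴴ = S := hSsa
  have hSS : S * S = ρ := by simpa using hSS'
  have key := trace_cs S (S * B)
  rw [hSH] at key
  have e1 : S * (S * B) = ρ * B := by rw [← Matrix.mul_assoc, hSS]
  have e2 : (S * S).trace.re = 1 := by rw [hSS, hTr]; rfl
  have e3 : ((S * B)ᴴ * (S * B)).trace.re = c := by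
    have : (S * B)ᴴ * (S * B) = Bᴴ * (ρ * B) := by
      rw [Matrix.conjTranspose_mul, hSH, Matrix.mul_assoc, ← Matrix.mul_assoc S S B, hSS]
    rw [this, hBH, ← Matrix.mul_assoc, Matrix.trace_mul_cycle, hB2, Matrix.smul_mul,
      Matrix.one_mul, Matrix.trace_smul, hTr]
    simp
  rw [e1, e2, e3, one_mul] at key
  have hre2 : c ^ 2 ≤ Complex.normSq ((ρ * B).trace) := by
    rw [Complex.normSq_apply, ← hre]
    nlinarith [sq_nonneg ((ρ * B).trace).im]
  have : c ^ 2 ≤ c := le_trans hre2 key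
  nlinarith

lemma quad_bound' {α : Type*} [Fintype α] [DecidableEq α]
    (ρ : Matrix α α ℂ) (hρ : ρ.PosSemidef) (hTr : ρ.trace = 1)
    (A0 A1 A2 A3 : Matrix α α ℂ)
    (hH0 : A0ᴴ = A0) (hH1 : A1ᴴ = A1) (hH2 : A2ᴴ = A2) (hH3 : A3ᴴ = A3)
    (hsq0 : A0 * A0 = 1) (hsq1 : A1 * A1 = 1) (hsq2 : A2 * A2 = 1) (hsq3 : A3 * A3 = 1)
    (h01 : A0 * A1 = -(A1 * A0)) (h02 : A0 * A2 = -(A2 * A0)) (h03 : A0 * A3 = -(A3 * A0))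
    (h12 : A1 * A2 = -(A2 * A1)) (h13 : A1 * A3 = -(A3 * A1)) (h23 : A2 * A3 = -(A3 * A2)) :
    ((ρ * A0).trace.re) ^ 2 + ((ρ * A1).trace.re) ^ 2
      + ((ρ * A2).trace.re) ^ 2 + ((ρ * A3).trace.re) ^ 2 ≤ 1 := by
  have flip : ∀ {X Y : Matrix α α ℂ}, X * Y = -(Y * X) → Y * X = -(X * Y) :=
    fun h => by rw [h, neg_neg]
  have := quad_bound ρ hρ hTr ![A0, A1, A2, A3]
    (by intro a; fin_cases a <;> assumption)
    (by intro a; fin_cases a <;> assumption)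
    (by
      intro a b hab
      fin_cases a <;> fin_cases b <;>
        first
          | exact absurd rfl hab
          | exact h01 | exact h02 | exact h03 | exact h12 | exact h13 | exact h23
          | exact flip h01 | exact flip h02 | exact flip h03
          | exact flip h12 | exact flip h13 | exact flip h23)
  rw [Fin.sum_univ_four] at this
  simpa using this

end Quad


/-- Monogamy relation (6): for any `n`-qubit density matrix and
pairwise distinct qubits `k, l, m`: `M_{kl}(ρ) + M_{lm}(ρ) ≤ 2`. -/
theorem Mkl_add_Mlm_le_two (n : ℕ) (hn : 3 ≤ n)
    (ρ : Matrix (Fin n → Fin 2) (Fin n → Fin 2) ℂ)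
    (hρ : ρ.PosSemidef) (hTr : ρ.trace = 1)
    (k l m : Fin n) (hkl : k ≠ l) (hlm : l ≠ m) (hkm : k ≠ m) :
    Mkl ρ k l + Mkl ρ l m ≤ 2 := by
  have hlk : l ≠ k := Ne.symm hkl
  have hml : m ≠ l := Ne.symm hlm
  have hmk : m ≠ k := Ne.symm hkm
  -- quadruple 1: σ_i^k σ_1^l (i = 1,2) together with σ_2^l σ_j^m (j = 1,2)
  have q1 := quad_bound' ρ hρ hTr
    (kronOp (fun q : Fin n => if q = k then 1 else if q = l then 1 else 0))
    (kronOp (fun q : Fin n => if q = k then 2 else if q = l then 1 else 0))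
    (kronOp (fun q : Fin n => if q = l then 2 else if q = m then 1 else 0))
    (kronOp (fun q : Fin n => if q = l then 2 else if q = m then 2 else 0))
    (kronOp_herm _) (kronOp_herm _) (kronOp_herm _) (kronOp_herm _)
    (kronOp_mul_self _) (kronOp_mul_self _) (kronOp_mul_self _) (kronOp_mul_self _)
    (kronOp_anticomm _ _ k (by simp [hkl, hlm, hkm, hlk, hml, hmk, pauli12])
      (by intro q hq; by_cases h1 : q = l <;> simp [h1, hq, hkl, hlm, hkm, hlk, hml, hmk]))
    (kronOp_anticomm _ _ l (by simp [hkl, hlm, hkm, hlk, hml, hmk, pauli12])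
      (by intro q hq; by_cases h1 : q = k <;> by_cases h2 : q = m <;>
        simp [h1, h2, hq, hkl, hlm, hkm, hlk, hml, hmk]))
    (kronOp_anticomm _ _ l (by simp [hkl, hlm, hkm, hlk, hml, hmk, pauli12])
      (by intro q hq; by_cases h1 : q = k <;> by_cases h2 : q = m <;>
        simp [h1, h2, hq, hkl, hlm, hkm, hlk, hml, hmk]))
    (kronOp_anticomm _ _ l (by simp [hkl, hlm, hkm, hlk, hml, hmk, pauli12])
      (by intro q hq; by_cases h1 : q = k <;> by_cases h2 : q = m <;>
        simp [h1, h2, hq, hkl, hlm, hkm, hlk, hml, hmk]))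
    (kronOp_anticomm _ _ l (by simp [hkl, hlm, hkm, hlk, hml, hmk, pauli12])
      (by intro q hq; by_cases h1 : q = k <;> by_cases h2 : q = m <;>
        simp [h1, h2, hq, hkl, hlm, hkm, hlk, hml, hmk]))
    (kronOp_anticomm _ _ m (by simp [hkl, hlm, hkm, hlk, hml, hmk, pauli12])
      (by intro q hq; by_cases h1 : q = l <;> simp [h1, hq, hkl, hlm, hkm, hlk, hml, hmk]))
  -- quadruple 2: σ_i^k σ_2^l (i = 1,2) together with σ_1^l σ_j^m (j = 1,2)
  have q2 := quad_bound' ρ hρ hTr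
    (kronOp (fun q : Fin n => if q = k then 1 else if q = l then 2 else 0))
    (kronOp (fun q : Fin n => if q = k then 2 else if q = l then 2 else 0))
    (kronOp (fun q : Fin n => if q = l then 1 else if q = m then 1 else 0))
    (kronOp (fun q : Fin n => if q = l then 1 else if q = m then 2 else 0))
    (kronOp_herm _) (kronOp_herm _) (kronOp_herm _) (kronOp_herm _)
    (kronOp_mul_self _) (kronOp_mul_self _) (kronOp_mul_self _) (kronOp_mul_self _)
    (kronOp_anticomm _ _ k (by simp [hkl, hlm, hkm, hlk, hml, hmk, pauli12])
      (by intro q hq; by_cases h1 : q = l <;> simp [h1, hq, hkl, hlm, hkm, hlk, hml, hmk]))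
    (kronOp_anticomm _ _ l (by simp [hkl, hlm, hkm, hlk, hml, hmk, pauli21])
      (by intro q hq; by_cases h1 : q = k <;> by_cases h2 : q = m <;>
        simp [h1, h2, hq, hkl, hlm, hkm, hlk, hml, hmk]))
    (kronOp_anticomm _ _ l (by simp [hkl, hlm, hkm, hlk, hml, hmk, pauli21])
      (by intro q hq; by_cases h1 : q = k <;> by_cases h2 : q = m <;>
        simp [h1, h2, hq, hkl, hlm, hkm, hlk, hml, hmk]))
    (kronOp_anticomm _ _ l (by simp [hkl, hlm, hkm, hlk, hml, hmk, pauli21])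
      (by intro q hq; by_cases h1 : q = k <;> by_cases h2 : q = m <;>
        simp [h1, h2, hq, hkl, hlm, hkm, hlk, hml, hmk]))
    (kronOp_anticomm _ _ l (by simp [hkl, hlm, hkm, hlk, hml, hmk, pauli21])
      (by intro q hq; by_cases h1 : q = k <;> by_cases h2 : q = m <;>
        simp [h1, h2, hq, hkl, hlm, hkm, hlk, hml, hmk]))
    (kronOp_anticomm _ _ m (by simp [hkl, hlm, hkm, hlk, hml, hmk, pauli12])
      (by intro q hq; by_cases h1 : q = l <;> simp [h1, hq, hkl, hlm, hkm, hlk, hml, hmk]))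
  have hIcc : (Finset.Icc 1 2 : Finset ℕ) = {1, 2} := rfl
  have e1 : Mkl ρ k l = corr ρ k l 1 1 ^ 2 + corr ρ k l 1 2 ^ 2
      + corr ρ k l 2 1 ^ 2 + corr ρ k l 2 2 ^ 2 := by
    rw [Mkl, hIcc]
    simp [Finset.sum_insert, Finset.sum_singleton]
    ring
  have e2 : Mkl ρ l m = corr ρ l m 1 1 ^ 2 + corr ρ l m 1 2 ^ 2
      + corr ρ l m 2 1 ^ 2 + corr ρ l m 2 2 ^ 2 := by
    rw [Mkl, hIcc]
    simp [Finset.sum_insert, Finset.sum_singleton]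
    ring
  rw [e1, e2]
  have c11 : corr ρ k l 1 1
      = (ρ * kronOp (fun q : Fin n => if q = k then 1 else if q = l then 1 else 0)).trace.re := rfl
  have c21 : corr ρ k l 2 1
      = (ρ * kronOp (fun q : Fin n => if q = k then 2 else if q = l then 1 else 0)).trace.re := rfl
  have c12 : corr ρ k l 1 2
      = (ρ * kronOp (fun q : Fin n => if q = k then 1 else if q = l then 2 else 0)).trace.re := rfl
  have c22 : corr ρ k l 2 2
      = (ρ * kronOp (fun q : Fin n => if q = k then 2 else if q = l then 2 else 0)).trace.re := rfl
  have d11 : corr ρ l m 1 1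
      = (ρ * kronOp (fun q : Fin n => if q = l then 1 else if q = m then 1 else 0)).trace.re := rfl
  have d12 : corr ρ l m 1 2
      = (ρ * kronOp (fun q : Fin n => if q = l then 1 else if q = m then 2 else 0)).trace.re := rfl
  have d21 : corr ρ l m 2 1
      = (ρ * kronOp (fun q : Fin n => if q = l then 2 else if q = m then 1 else 0)).trace.re := rfl
  have d22 : corr ρ l m 2 2
      = (ρ * kronOp (fun q : Fin n => if q = l then 2 else if q = m then 2 else 0)).trace.re := rfl
  rw [c11, c21, c12, c22, d11, d12, d21, d22]
  linarith
end

section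
/- Tightness of the bound in Proposition 1: Let n ≥ 3 and let ψ = |+⟩^{⊗n} be the n-fold tensor product of the single-qubit state |+⟩ = (1/√2)(|0⟩ + |1⟩) (the +1 eigenstate of σ₁), with density matrix ρ_ψ = ψψ†. Then T^{kl}_{11}(ρ_ψ) = 1 for every pair k < l, and consequently M(ρ_ψ) = Σ_{1≤k<l≤n} M_{kl}(ρ_ψ) = C(n,2), so the bound M ≤ C(n,2) is attained. -/
namespace MtotAux

noncomputable def S (m : ℕ) : ℂ := ∑ b : Fin 2, ∑ a : Fin 2, pauli m b a

lemma S0 : S 0 = 2 := by simp [S, pauli, Fin.sum_univ_two, Matrix.one_apply]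
lemma S1 : S 1 = 2 := by simp [S, pauli, Fin.sum_univ_two]; norm_num
lemma S2 : S 2 = 0 := by simp [S, pauli, Fin.sum_univ_two]

open Finset in
lemma card_lt_generic {ι : Type*} [Fintype ι] [LinearOrder ι] :
    (Finset.univ.filter (fun p : ι × ι => p.1 < p.2)).card = (Fintype.card ι).choose 2 := by
  classical
  have hswap : (univ.filter (fun p : ι × ι => p.1 < p.2)).card
      = (univ.filter (fun p : ι × ι => p.2 < p.1)).card := by
    apply Finset.card_bij (fun p _ => (p.2, p.1))
    · intro a ha; simp_all
    · intro a _ b _ h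
      exact Prod.ext (congrArg Prod.snd h) (congrArg Prod.fst h)
    · intro b hb
      refine ⟨(b.2, b.1), by simp_all, by simp⟩
  have h1 : (univ.filter (fun p : ι × ι => p.1 < p.2)).card
      + (univ.filter (fun p : ι × ι => ¬ p.1 < p.2)).card
      = Fintype.card ι * Fintype.card ι := by
    rw [Finset.card_filter_add_card_filter_not, Finset.card_univ]
    simp
  have hsplit : (univ.filter (fun p : ι × ι => ¬ p.1 < p.2))
      = (univ.filter (fun p : ι × ι => p.2 < p.1)) ∪ (univ.filter (fun p : ι × ι => p.1 = p.2)) := by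
    ext p
    simp only [Finset.mem_filter, Finset.mem_union, Finset.mem_univ, true_and, not_lt]
    constructor
    · intro h; rcases lt_or_eq_of_le h with h' | h'
      · exact Or.inl h'
      · exact Or.inr h'.symm
    · rintro (h | h)
      · exact h.le
      · exact h.ge
  have hdiag : (univ.filter (fun p : ι × ι => p.1 = p.2)).card = Fintype.card ι := by
    rw [show (univ.filter (fun p : ι × ι => p.1 = p.2)) = univ.image (fun a : ι => (a, a)) by
      ext p
      simp only [Finset.mem_filter, Finset.mem_univ, true_and, Finset.mem_image]
      constructor
      · intro h
        refine ⟨p.1, ?_⟩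
        obtain ⟨a, b⟩ := p
        cases h
        rfl
      · rintro ⟨a, rfl⟩; rfl]
    rw [Finset.card_image_of_injective _ (fun a b h => (Prod.ext_iff.mp h).1), Finset.card_univ]
  have hdisj : Disjoint (univ.filter (fun p : ι × ι => p.2 < p.1))
      (univ.filter (fun p : ι × ι => p.1 = p.2)) := by
    rw [Finset.disjoint_left]
    intro p hp hp'
    simp only [Finset.mem_filter] at hp hp'
    exact absurd hp'.2 hp.2.ne'
  rw [hsplit, Finset.card_union_of_disjoint hdisj, hdiag, ← hswap] at h1
  generalize hA : Fintype.card ι * Fintype.card ι = A at h1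
  rw [Nat.choose_two_right]
  generalize hB : Fintype.card ι * (Fintype.card ι - 1) = B
  have hAB : A = B + Fintype.card ι := by
    rw [← hA, ← hB]
    rcases Fintype.card ι with _ | m
    · simp
    · simp only [Nat.succ_sub_one]
      ring
  omega


variable {ι : Type*} [Fintype ι] [DecidableEq ι]

lemma sum_prod_eval (F : ι → Fin 2 → ℂ) :
    ∑ x : ι → Fin 2, ∏ q, F q (x q) = ∏ q, ∑ a, F q a :=
  (Fintype.prod_sum F).symm

lemma key (g : ι → Matrix (Fin 2) (Fin 2) ℂ) :
    ∑ x : ι → Fin 2, ∑ y : ι → Fin 2, ∏ q, g q (y q) (x q)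
      = ∏ q, ∑ a, ∑ b, g q b a := by
  have h1 : ∀ x : ι → Fin 2,
      ∑ y : ι → Fin 2, ∏ q, g q (y q) (x q) = ∏ q, ∑ b, g q b (x q) :=
    fun x => sum_prod_eval fun q b => g q b (x q)
  simp_rw [h1]
  exact sum_prod_eval fun q a => ∑ b, g q b a

lemma trace_const (f : ι → ℕ) (ρ : Matrix (ι → Fin 2) (ι → Fin 2) ℂ)
    (hρ : ∀ x y, ρ x y = (2:ℂ)⁻¹ ^ Fintype.card ι) :
    (ρ * kronOp f).trace = (2:ℂ)⁻¹ ^ Fintype.card ι * ∏ q, S (f q) := by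
  have hS : ∀ q, (∑ a : Fin 2, ∑ b : Fin 2, pauli (f q) b a) = S (f q) := by
    intro q; rw [S, Finset.sum_comm]
  simp only [Matrix.trace, Matrix.diag, Matrix.mul_apply, hρ, kronOp, Matrix.of_apply,
    ← Finset.mul_sum]
  rw [key fun q => pauli (f q)]
  simp_rw [hS]

lemma corr_eq (ρ : Matrix (ι → Fin 2) (ι → Fin 2) ℂ)
    (hρ : ∀ x y, ρ x y = (2:ℂ)⁻¹ ^ Fintype.card ι) (k l : ι) (i j : ℕ) :
    corr ρ k l i j
      = ((2:ℂ)⁻¹ ^ Fintype.card ι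
          * ∏ q, S (if q = k then i else if q = l then j else 0)).re := by
  rw [corr, trace_const _ ρ hρ]

lemma corr11 (ρ : Matrix (ι → Fin 2) (ι → Fin 2) ℂ)
    (hρ : ∀ x y, ρ x y = (2:ℂ)⁻¹ ^ Fintype.card ι) (k l : ι) :
    corr ρ k l 1 1 = 1 := by
  rw [corr_eq ρ hρ k l]
  have h2 : ∀ q : ι, S (if q = k then 1 else if q = l then 1 else 0) = 2 := by
    intro q; split_ifs <;> simp [S0, S1]
  rw [Finset.prod_congr rfl fun q _ => h2 q, Finset.prod_const, Finset.card_univ,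
    ← mul_pow, inv_mul_cancel₀ (by norm_num : (2:ℂ) ≠ 0), one_pow, Complex.one_re]

lemma corr_zero_right (ρ : Matrix (ι → Fin 2) (ι → Fin 2) ℂ)
    (hρ : ∀ x y, ρ x y = (2:ℂ)⁻¹ ^ Fintype.card ι) (k l : ι)
    (hkl : k ≠ l) (i : ℕ) : corr ρ k l i 2 = 0 := by
  rw [corr_eq ρ hρ k l]
  rw [Finset.prod_eq_zero (Finset.mem_univ l) (by simp [hkl.symm, S2])]
  simp

lemma corr_zero_left (ρ : Matrix (ι → Fin 2) (ι → Fin 2) ℂ)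
    (hρ : ∀ x y, ρ x y = (2:ℂ)⁻¹ ^ Fintype.card ι) (k l : ι)
    (j : ℕ) : corr ρ k l 2 j = 0 := by
  rw [corr_eq ρ hρ k l]
  rw [Finset.prod_eq_zero (Finset.mem_univ k) (by simp [S2])]
  simp

lemma Mkl_eq (ρ : Matrix (ι → Fin 2) (ι → Fin 2) ℂ)
    (hρ : ∀ x y, ρ x y = (2:ℂ)⁻¹ ^ Fintype.card ι) (k l : ι)
    (hkl : k ≠ l) : Mkl ρ k l = 1 := by
  have h12 : (Finset.Icc 1 2 : Finset ℕ) = {1, 2} := by decide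
  rw [Mkl]
  simp only [h12, Finset.sum_insert (by decide : (1:ℕ) ∉ ({2} : Finset ℕ)),
    Finset.sum_singleton]
  rw [corr11 ρ hρ k l, corr_zero_right ρ hρ k l hkl,
    corr_zero_left ρ hρ k l, corr_zero_left ρ hρ k l]
  norm_num

lemma Mtot_eq {ι : Type*} [Fintype ι] [LinearOrder ι]
    (ρ : Matrix (ι → Fin 2) (ι → Fin 2) ℂ)
    (hρ : ∀ x y, ρ x y = (2:ℂ)⁻¹ ^ Fintype.card ι) :
    Mtot ρ = ((Fintype.card ι).choose 2 : ℝ) := by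
  rw [Mtot]
  have step : ∀ p ∈ Finset.univ.filter (fun p : ι × ι => p.1 < p.2),
      Mkl ρ p.1 p.2 = 1 := by
    intro p hp
    exact Mkl_eq ρ hρ p.1 p.2 (Finset.mem_filter.mp hp).2.ne
  rw [Finset.sum_congr rfl step, Finset.sum_const, card_lt_generic, nsmul_eq_mul, mul_one]

end MtotAux

/-- Tightness of Proposition 1: for `ψ = |+⟩^{⊗n}`, every
correlation `T^{kl}_{11}` equals `1`, and `M(ρ_ψ) = C(n,2)`, so the bound of
Proposition 1 is attained. -/
theorem Mtot_plus_state (n : ℕ) (hn : 3 ≤ n)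
    (ψ : (Fin n → Fin 2) → ℂ)
    (hψ : ψ = fun _ => ((Real.sqrt 2 : ℝ) : ℂ)⁻¹ ^ n) :
    (∀ k l : Fin n, k < l → corr (pureDensity ψ) k l 1 1 = 1) ∧
      Mtot (pureDensity ψ) = (n.choose 2 : ℝ) := by
  have hρ : ∀ x y : Fin n → Fin 2,
      pureDensity ψ x y = (2:ℂ)⁻¹ ^ Fintype.card (Fin n) := by
    intro x y
    simp only [pureDensity, Matrix.of_apply, hψ, map_pow, map_inv₀, Complex.conj_ofReal]
    rw [← mul_pow, ← mul_inv, ← Complex.ofReal_mul,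
      Real.mul_self_sqrt (by norm_num : (0:ℝ) ≤ 2), Fintype.card_fin]
    norm_num
  constructor
  · intro k l _
    exact MtotAux.corr11 (pureDensity ψ) hρ k l
  · rw [MtotAux.Mtot_eq (pureDensity ψ) hρ, Fintype.card_fin]
end

section
/- Proposition 2: Let n = r₁ + … + r_k with all r_m ≥ 1, and let ψ = ψ₁ ⊗ … ⊗ ψ_k be a pure n-qubit state that is the tensor product of pure r_m-qubit states ψ_m over consecutive blocks of qubits. If each ψ_m satisfies the preferred-basis condition (all its single-qubit transverse Bloch components b^{(q)}_1 and b^{(q)}_2 vanish), then M(ρ_ψ) = Σ_{m=1}^{k} M(ρ_{ψ_m}); that is, all cross-block terms M_{kl} vanish and the quantity M is additive over the factors. -/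
/-- Starting position of the `m`-th consecutive block of sizes `r`. -/
def blockStart {k : ℕ} (r : Fin k → ℕ) (m : Fin k) : ℕ :=
  ∑ m' ∈ Finset.univ.filter (fun m' => m' < m), r m'

/-- The `m`-th consecutive block of qubits (of size `r m`) inside `Fin n`. -/
def consecBlock (n : ℕ) {k : ℕ} (r : Fin k → ℕ) (m : Fin k) : Finset (Fin n) :=
  Finset.univ.filter (fun q => blockStart r m ≤ q.val ∧ q.val < blockStart r m + r m)

/-- Restriction of an `n`-bit string to a block of qubits. -/
def restrictB {n : ℕ} (S : Finset (Fin n)) (f : Fin n → Fin 2) : (↥S → Fin 2) :=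
  fun q => f q.val

lemma pauli_conj (i : ℕ) (a b : Fin 2) : (starRingEnd ℂ) (pauli i a b) = pauli i b a := by
  match i with
  | 0 => simp [pauli, Matrix.one_apply, eq_comm, apply_ite (starRingEnd ℂ)]
  | 1 => fin_cases a <;> fin_cases b <;> simp [pauli]
  | 2 => fin_cases a <;> fin_cases b <;> simp [pauli]
  | 3 => fin_cases a <;> fin_cases b <;> simp [pauli]
  | (m+4) => simp [pauli, Matrix.one_apply, eq_comm, apply_ite (starRingEnd ℂ)]

lemma trace_expand {ι : Type*} [Fintype ι] [DecidableEq ι] (ψ : (ι → Fin 2) → ℂ)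
    (f : ι → ℕ) :
    (pureDensity ψ * kronOp f).trace
      = ∑ x, ∑ y, ψ x * (starRingEnd ℂ) (ψ y) * ∏ q, pauli (f q) (y q) (x q) := by
  simp [Matrix.trace, Matrix.diag, Matrix.mul_apply, pureDensity, kronOp]

lemma kronOp_zero {ι : Type*} [Fintype ι] [DecidableEq ι] :
    kronOp (fun _ : ι => 0) = (1 : Matrix (ι → Fin 2) (ι → Fin 2) ℂ) := by
  ext x y
  simp only [kronOp, Matrix.of_apply, pauli, Matrix.one_apply]
  by_cases h : x = y
  · subst h; simp
  · rw [if_neg h]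
    obtain ⟨q, hq⟩ : ∃ q, x q ≠ y q := by
      by_contra hc; push_neg at hc; exact h (funext hc)
    exact Finset.prod_eq_zero (Finset.mem_univ q) (by rw [if_neg hq])

lemma trace_one {ι : Type*} [Fintype ι] [DecidableEq ι] {ψ : (ι → Fin 2) → ℂ}
    (h : UnitVec ψ) : (pureDensity ψ * kronOp (fun _ : ι => 0)).trace = 1 := by
  rw [kronOp_zero, mul_one]
  simp only [Matrix.trace, Matrix.diag, pureDensity, Matrix.of_apply, Complex.mul_conj]
  rw [← Complex.ofReal_sum, h, Complex.ofReal_one]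

lemma trace_real {ι : Type*} [Fintype ι] [DecidableEq ι] (ψ : (ι → Fin 2) → ℂ)
    (f : ι → ℕ) :
    (starRingEnd ℂ) ((pureDensity ψ * kronOp f).trace)
      = (pureDensity ψ * kronOp f).trace := by
  rw [trace_expand]
  conv_rhs => rw [Finset.sum_comm]
  simp only [map_sum, map_mul, map_prod, pauli_conj, Complex.conj_conj]
  refine Finset.sum_congr rfl fun y _ => Finset.sum_congr rfl fun x _ => ?_
  ring

lemma mem_consecBlock {n k : ℕ} {r : Fin k → ℕ} {m : Fin k} {q : Fin n} :
    q ∈ consecBlock n r m ↔ blockStart r m ≤ q.val ∧ q.val < blockStart r m + r m := by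
  simp [consecBlock]

lemma blockStart_succ {k : ℕ} (r : Fin k → ℕ) (m : Fin k) :
    blockStart r m + r m = ∑ m' ∈ Finset.univ.filter (fun m' => m' ≤ m), r m' := by
  have h : Finset.univ.filter (fun m' => m' ≤ m)
      = insert m (Finset.univ.filter (fun m' : Fin k => m' < m)) := by
    ext m'
    simp [le_iff_lt_or_eq, or_comm]
  rw [h, Finset.sum_insert (by simp)]
  unfold blockStart; ring

lemma blockStart_add_le {k : ℕ} (r : Fin k → ℕ) {m1 m2 : Fin k} (h : m1 < m2) :
    blockStart r m1 + r m1 ≤ blockStart r m2 := by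
  rw [blockStart_succ]
  apply Finset.sum_le_sum_of_subset
  intro m' hm'
  simp only [Finset.mem_filter, Finset.mem_univ, true_and] at *
  exact lt_of_le_of_lt hm' h

lemma existsUnique_block {n k : ℕ} {r : Fin k → ℕ} (hsum : ∑ m, r m = n) (q : Fin n) :
    ∃! m, q ∈ consecBlock n r m := by
  have hk : 0 < k := by
    rcases Nat.eq_zero_or_pos k with hk | hk
    · subst hk; simp at hsum; have := q.isLt; omega
    · exact hk
  have hex : ∃ m, q ∈ consecBlock n r m := by
    set S := Finset.univ.filter (fun m : Fin k => blockStart r m ≤ q.val) with hS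
    have h0 : (⟨0, hk⟩ : Fin k) ∈ S := by
      simp only [hS, Finset.mem_filter, Finset.mem_univ, true_and]
      have : blockStart r ⟨0, hk⟩ = 0 := by
        unfold blockStart
        apply Finset.sum_eq_zero
        intro m' hm'
        simp only [Finset.mem_filter, Finset.mem_univ, true_and] at hm'
        exact absurd hm' (by simp [Fin.lt_def])
      omega
    have hne : S.Nonempty := ⟨_, h0⟩
    set m := S.max' hne with hm
    have hmS : m ∈ S := S.max'_mem hne
    simp only [hS, Finset.mem_filter, Finset.mem_univ, true_and] at hmS
    refine ⟨m, mem_consecBlock.2 ⟨hmS, ?_⟩⟩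
    by_contra hcon
    push_neg at hcon
    by_cases hlt : m.val + 1 < k
    · have hmem : (⟨m.val + 1, hlt⟩ : Fin k) ∈ S := by
        simp only [hS, Finset.mem_filter, Finset.mem_univ, true_and]
        have : blockStart r ⟨m.val + 1, hlt⟩ = blockStart r m + r m := by
          rw [blockStart_succ]
          apply Finset.sum_congr _ (fun _ _ => rfl)
          ext m'
          simp only [Finset.mem_filter, Finset.mem_univ, true_and, Fin.lt_def, Fin.le_def]
          exact Nat.lt_succ_iff
        omega
      have := S.le_max' _ hmem
      rw [← hm] at this
      rw [Fin.le_def] at this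
      simp at this
    · have hlast : ∀ m' : Fin k, m' ≤ m := by
        intro m'
        have := m'.isLt
        rw [Fin.le_def]; omega
      have : blockStart r m + r m = n := by
        rw [blockStart_succ, ← hsum]
        apply Finset.sum_congr _ (fun _ _ => rfl)
        ext m'
        simp only [Finset.mem_filter, Finset.mem_univ, true_and, iff_true]
        exact hlast m'
      have := q.isLt
      omega
  obtain ⟨m, hm⟩ := hex
  refine ⟨m, hm, fun m' hm' => ?_⟩
  by_contra hne
  rw [mem_consecBlock] at hm hm'
  rcases lt_or_gt_of_ne hne with h | h
  · have := blockStart_add_le r h; omega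
  · have := blockStart_add_le r h; omega

noncomputable def blockOf {n k : ℕ} (r : Fin k → ℕ) (hsum : ∑ m, r m = n) (q : Fin n) :
    Fin k :=
  Fintype.choose _ (existsUnique_block hsum q)

lemma blockOf_mem {n k : ℕ} (r : Fin k → ℕ) (hsum : ∑ m, r m = n) (q : Fin n) :
    q ∈ consecBlock n r (blockOf r hsum q) :=
  Fintype.choose_spec _ (existsUnique_block hsum q)

lemma blockOf_eq {n k : ℕ} (r : Fin k → ℕ) (hsum : ∑ m, r m = n) {q : Fin n} {m : Fin k}
    (h : q ∈ consecBlock n r m) : blockOf r hsum q = m :=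
  (existsUnique_block hsum q).unique (blockOf_mem r hsum q) h

lemma blockOf_eq_iff {n k : ℕ} (r : Fin k → ℕ) (hsum : ∑ m, r m = n) {q : Fin n} {m : Fin k} :
    blockOf r hsum q = m ↔ q ∈ consecBlock n r m := by
  constructor
  · rintro rfl; exact blockOf_mem r hsum q
  · exact blockOf_eq r hsum

noncomputable def blockEquiv {n k : ℕ} (r : Fin k → ℕ) (hsum : ∑ m, r m = n) :
    (Fin n → Fin 2) ≃ ((m : Fin k) → (↥(consecBlock n r m) → Fin 2)) where
  toFun x := fun m => restrictB _ x
  invFun z := fun q => z (blockOf r hsum q) ⟨q, blockOf_mem r hsum q⟩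
  left_inv x := rfl
  right_inv z := by
    funext m s
    obtain ⟨q, hq⟩ := s
    show z (blockOf r hsum q) ⟨q, blockOf_mem r hsum q⟩ = z m ⟨q, hq⟩
    have h : blockOf r hsum q = m := blockOf_eq r hsum hq
    subst h
    rfl


lemma prod_block {n k : ℕ} (r : Fin k → ℕ) (hsum : ∑ m, r m = n) (g : Fin n → ℂ) :
    ∏ q, g q = ∏ m, ∏ s : ↥(consecBlock n r m), g s.val := by
  rw [← Finset.prod_fiberwise Finset.univ (blockOf r hsum) g]
  refine Finset.prod_congr rfl fun m _ => ?_
  rw [Finset.prod_coe_sort]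
  refine Finset.prod_congr ?_ (fun _ _ => rfl)
  ext q
  simp only [Finset.mem_filter, Finset.mem_univ, true_and]
  exact blockOf_eq_iff r hsum

lemma sum_factor {n k : ℕ} (r : Fin k → ℕ) (hsum : ∑ m, r m = n)
    (g : (m : Fin k) → (↥(consecBlock n r m) → Fin 2) → ℂ) :
    ∑ x : Fin n → Fin 2, ∏ m, g m (restrictB (consecBlock n r m) x)
      = ∏ m, ∑ z, g m z := by
  rw [← Equiv.sum_comp (blockEquiv r hsum).symm
    (fun x => ∏ m, g m (restrictB (consecBlock n r m) x))]
  have h1 : ∀ w, ∏ m, g m (restrictB (consecBlock n r m) ((blockEquiv r hsum).symm w))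
      = ∏ m, g m (w m) := by
    intro w
    refine Finset.prod_congr rfl fun m _ => ?_
    congr 1
    exact congrFun ((blockEquiv r hsum).apply_symm_apply w) m
  simp only [h1]
  rw [show (fun m => ∑ z, g m z) = fun m => ∑ z ∈ Finset.univ, g m z from rfl]
  rw [Finset.prod_univ_sum, Fintype.piFinset_univ]

lemma trace_factor {n k : ℕ} (r : Fin k → ℕ) (hsum : ∑ m, r m = n)
    (φ : (m : Fin k) → ((↥(consecBlock n r m) → Fin 2) → ℂ))
    (ψ : (Fin n → Fin 2) → ℂ)
    (hψ : ∀ f : Fin n → Fin 2, ψ f = ∏ m, φ m (restrictB (consecBlock n r m) f))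
    (f : Fin n → ℕ) :
    (pureDensity ψ * kronOp f).trace
      = ∏ m, (pureDensity (φ m)
          * kronOp (fun s : ↥(consecBlock n r m) => f s.val)).trace := by
  have hA : ∀ m, (pureDensity (φ m)
      * kronOp (fun s : ↥(consecBlock n r m) => f s.val)).trace
      = ∑ u, ∑ v, (φ m u * (starRingEnd ℂ) (φ m v)
          * ∏ s : ↥(consecBlock n r m), pauli (f s.val) (v s) (u s)) :=
    fun m => trace_expand (φ m) _
  rw [trace_expand]
  simp only [hA]
  have key : ∀ x y : Fin n → Fin 2,
      ψ x * (starRingEnd ℂ) (ψ y) * ∏ q, pauli (f q) (y q) (x q)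
      = ∏ m, (φ m (restrictB (consecBlock n r m) x)
          * (starRingEnd ℂ) (φ m (restrictB (consecBlock n r m) y))
          * ∏ s : ↥(consecBlock n r m), pauli (f s.val)
              (restrictB (consecBlock n r m) y s) (restrictB (consecBlock n r m) x s)) := by
    intro x y
    rw [hψ x, hψ y, map_prod, prod_block r hsum (fun q => pauli (f q) (y q) (x q))]
    rw [Finset.prod_mul_distrib, Finset.prod_mul_distrib]
    rfl
  simp only [key]
  have step1 : ∀ x : Fin n → Fin 2,
      ∑ y : Fin n → Fin 2, ∏ m, (φ m (restrictB (consecBlock n r m) x)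
          * (starRingEnd ℂ) (φ m (restrictB (consecBlock n r m) y))
          * ∏ s : ↥(consecBlock n r m), pauli (f s.val)
              (restrictB (consecBlock n r m) y s) (restrictB (consecBlock n r m) x s))
      = ∏ m, ∑ v, (φ m (restrictB (consecBlock n r m) x)
          * (starRingEnd ℂ) (φ m v)
          * ∏ s : ↥(consecBlock n r m), pauli (f s.val) (v s)
              (restrictB (consecBlock n r m) x s)) := by
    intro x
    exact sum_factor r hsum (fun m v => φ m (restrictB (consecBlock n r m) x)
      * (starRingEnd ℂ) (φ m v)
      * ∏ s : ↥(consecBlock n r m), pauli (f s.val) (v s)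
          (restrictB (consecBlock n r m) x s))
  simp only [step1]
  exact sum_factor r hsum (fun m u => ∑ v, (φ m u * (starRingEnd ℂ) (φ m v)
    * ∏ s : ↥(consecBlock n r m), pauli (f s.val) (v s) (u s)))

lemma mem_block_val_ne {n k : ℕ} (r : Fin k → ℕ) (hsum : ∑ m, r m = n)
    {m m' : Fin k} (hne : m' ≠ m) {a : Fin n} (ha : a ∈ consecBlock n r m)
    (s : ↥(consecBlock n r m')) : (s : Fin n) ≠ a := by
  intro h
  have hs : a ∈ consecBlock n r m' := h ▸ s.2
  exact hne ((blockOf_eq r hsum hs) ▸ (blockOf_eq r hsum ha).symm ▸ rfl)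

lemma corr_same {n k : ℕ} (r : Fin k → ℕ) (hsum : ∑ m, r m = n)
    (φ : (m : Fin k) → ((↥(consecBlock n r m) → Fin 2) → ℂ))
    (hunit : ∀ m, UnitVec (φ m))
    (ψ : (Fin n → Fin 2) → ℂ)
    (hψ : ∀ f : Fin n → Fin 2, ψ f = ∏ m, φ m (restrictB (consecBlock n r m) f))
    (m : Fin k) (a b : Fin n) (ha : a ∈ consecBlock n r m) (hb : b ∈ consecBlock n r m)
    (i j : ℕ) :
    corr (pureDensity ψ) a b i j = corr (pureDensity (φ m)) ⟨a, ha⟩ ⟨b, hb⟩ i j := by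
  unfold corr
  rw [trace_factor r hsum φ ψ hψ]
  rw [Fintype.prod_eq_single m]
  · have harg : (fun s : ↥(consecBlock n r m) =>
        if (s : Fin n) = a then i else if (s : Fin n) = b then j else 0)
        = fun s : ↥(consecBlock n r m) =>
            if s = (⟨a, ha⟩ : ↥(consecBlock n r m)) then i
            else if s = (⟨b, hb⟩ : ↥(consecBlock n r m)) then j else 0 := by
      funext s
      simp only [Subtype.ext_iff]
    rw [harg]
  · intro m' hm'
    have harg : (fun s : ↥(consecBlock n r m') =>
        if (s : Fin n) = a then i else if (s : Fin n) = b then j else 0)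
        = fun _ : ↥(consecBlock n r m') => 0 := by
      funext s
      rw [if_neg (mem_block_val_ne r hsum hm' ha s),
        if_neg (mem_block_val_ne r hsum hm' hb s)]
    rw [harg]
    exact trace_one (hunit m')

lemma Mkl_cross {n k : ℕ} (r : Fin k → ℕ) (hsum : ∑ m, r m = n)
    (φ : (m : Fin k) → ((↥(consecBlock n r m) → Fin 2) → ℂ))
    (hpb : ∀ m, PreferredBasis (pureDensity (φ m)))
    (ψ : (Fin n → Fin 2) → ℂ)
    (hψ : ∀ f : Fin n → Fin 2, ψ f = ∏ m, φ m (restrictB (consecBlock n r m) f))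
    {ma mb : Fin k} (hne : mb ≠ ma) (a b : Fin n)
    (ha : a ∈ consecBlock n r ma) (hb : b ∈ consecBlock n r mb) :
    Mkl (pureDensity ψ) a b = 0 := by
  unfold Mkl
  refine Finset.sum_eq_zero fun i hi => Finset.sum_eq_zero fun j hj => ?_
  suffices h : corr (pureDensity ψ) a b i j = 0 by rw [h]; ring
  unfold corr
  rw [trace_factor r hsum φ ψ hψ]
  rw [Finset.prod_eq_zero (Finset.mem_univ ma)]
  · simp
  · have harg : (fun s : ↥(consecBlock n r ma) =>
        if (s : Fin n) = a then i else if (s : Fin n) = b then j else 0)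
        = fun s : ↥(consecBlock n r ma) =>
            if s = (⟨a, ha⟩ : ↥(consecBlock n r ma)) then i else 0 := by
      funext s
      rw [if_neg (mem_block_val_ne r hsum (Ne.symm hne) hb s)]
      simp only [Subtype.ext_iff]
    rw [harg]
    have hreal := trace_real (φ ma)
      (fun s : ↥(consecBlock n r ma) => if s = (⟨a, ha⟩ : ↥(consecBlock n r ma)) then i else 0)
    rw [Complex.conj_eq_iff_re] at hreal
    rw [← hreal]
    have hre : ((pureDensity (φ ma) * kronOp (fun s : ↥(consecBlock n r ma) =>
        if s = (⟨a, ha⟩ : ↥(consecBlock n r ma)) then i else 0)).trace).re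
        = bloch (pureDensity (φ ma)) (⟨a, ha⟩ : ↥(consecBlock n r ma)) i := rfl
    rw [hre]
    simp only [Finset.mem_Icc] at hi
    obtain ⟨hi1, hi2⟩ := hi
    interval_cases i
    · rw [(hpb ma ⟨a, ha⟩).1]; simp
    · rw [(hpb ma ⟨a, ha⟩).2]; simp

lemma Mkl_congr {ι : Type*} (f1 f2 : Fintype ι) (d1 d2 : DecidableEq ι)
    (ρ : Matrix (ι → Fin 2) (ι → Fin 2) ℂ) (a b : ι) :
    @Mkl ι f1 d1 ρ a b = @Mkl ι f2 d2 ρ a b := by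
  cases Subsingleton.elim f1 f2
  cases Subsingleton.elim d1 d2
  rfl

lemma Mkl_same {n k : ℕ} (r : Fin k → ℕ) (hsum : ∑ m, r m = n)
    (φ : (m : Fin k) → ((↥(consecBlock n r m) → Fin 2) → ℂ))
    (hunit : ∀ m, UnitVec (φ m))
    (ψ : (Fin n → Fin 2) → ℂ)
    (hψ : ∀ f : Fin n → Fin 2, ψ f = ∏ m, φ m (restrictB (consecBlock n r m) f))
    (m : Fin k) (a b : Fin n) (ha : a ∈ consecBlock n r m) (hb : b ∈ consecBlock n r m) :
    Mkl (pureDensity ψ) a b = Mkl (pureDensity (φ m)) ⟨a, ha⟩ ⟨b, hb⟩ := by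
  unfold Mkl
  refine Finset.sum_congr rfl fun i _ => Finset.sum_congr rfl fun j _ => ?_
  rw [corr_same r hsum φ hunit ψ hψ m a b ha hb i j]

lemma final_sum' {n k : ℕ} (r : Fin k → ℕ) (hsum : ∑ m, r m = n)
    (F : Fin n × Fin n → ℝ)
    (G : (m : Fin k) → ↥(consecBlock n r m) × ↥(consecBlock n r m) → ℝ)
    (hcross : ∀ ma mb, mb ≠ ma → ∀ (a b : Fin n), a ∈ consecBlock n r ma →
      b ∈ consecBlock n r mb → F (a, b) = 0)
    (hsame : ∀ m (a b : Fin n) (ha : a ∈ consecBlock n r m) (hb : b ∈ consecBlock n r m),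
      F (a, b) = G m (⟨a, ha⟩, ⟨b, hb⟩))
    (S : Finset (Fin n × Fin n)) (hS : ∀ p, p ∈ S ↔ p.1 < p.2)
    (S' : (m : Fin k) → Finset (↥(consecBlock n r m) × ↥(consecBlock n r m)))
    (hS' : ∀ m (p : ↥(consecBlock n r m) × ↥(consecBlock n r m)),
      p ∈ S' m ↔ (p.1 : Fin n) < (p.2 : Fin n)) :
    ∑ p ∈ S, F p = ∑ m, ∑ p ∈ S' m, G m p := by
  classical
  rw [← Finset.sum_fiberwise S (fun p => blockOf r hsum p.1) (fun p => F p)]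
  refine Finset.sum_congr rfl fun m _ => ?_
  rw [← Finset.sum_filter_add_sum_filter_not
      (S.filter (fun p => blockOf r hsum p.1 = m))
      (fun p : Fin n × Fin n => blockOf r hsum p.2 = m)
      (fun p => F p)]
  have h2 : ∑ p ∈ (S.filter (fun p => blockOf r hsum p.1 = m)).filter
        (fun p : Fin n × Fin n => ¬ blockOf r hsum p.2 = m),
      F p = 0 := by
    refine Finset.sum_eq_zero fun p hp => ?_
    simp only [Finset.mem_filter] at hp
    have : F (p.1, p.2) = 0 :=
      hcross m (blockOf r hsum p.2) (by rw [hp.1.2] at hp; exact hp.2) p.1 p.2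
        ((blockOf_eq_iff r hsum).1 hp.1.2) (blockOf_mem r hsum p.2)
    simpa using this
  rw [h2, add_zero]
  set T := (S.filter (fun p => blockOf r hsum p.1 = m)).filter
        (fun p : Fin n × Fin n => blockOf r hsum p.2 = m) with hT
  have hmemT : ∀ p : Fin n × Fin n, p ∈ T ↔
      p.1 < p.2 ∧ p.1 ∈ consecBlock n r m ∧ p.2 ∈ consecBlock n r m := by
    intro p
    simp only [hT, Finset.mem_filter, hS p, blockOf_eq_iff r hsum]
    tauto
  refine Finset.sum_bij'
    (fun p hp => ((⟨p.1, ((hmemT p).1 hp).2.1⟩ : ↥(consecBlock n r m)),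
        (⟨p.2, ((hmemT p).1 hp).2.2⟩ : ↥(consecBlock n r m))))
    (fun p' _ => ((p'.1 : Fin n), (p'.2 : Fin n))) ?_ ?_ ?_ ?_ ?_
  · intro p hp
    rw [hS']
    exact ((hmemT p).1 hp).1
  · intro p' hp'
    rw [hS'] at hp'
    exact (hmemT _).2 ⟨hp', p'.1.2, p'.2.2⟩
  · intro p hp; rfl
  · intro p' hp'; rfl
  · intro p hp
    have := hsame m p.1 p.2 ((hmemT p).1 hp).2.1 ((hmemT p).1 hp).2.2
    simpa using this

/-- Proposition 2: if `ψ = ψ₁ ⊗ … ⊗ ψ_k` over consecutive blocks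
of sizes `r₁, …, r_k`, and each factor satisfies the preferred-basis condition,
then `M(ρ_ψ) = Σ_m M(ρ_{ψ_m})`. -/
theorem Mtot_additive_of_product (n k : ℕ) (hk : 1 ≤ k)
    (r : Fin k → ℕ) (hr : ∀ m, 1 ≤ r m) (hsum : ∑ m, r m = n)
    (φ : (m : Fin k) → ((↥(consecBlock n r m) → Fin 2) → ℂ))
    (hunit : ∀ m, UnitVec (φ m))
    (hpb : ∀ m, PreferredBasis (pureDensity (φ m)))
    (ψ : (Fin n → Fin 2) → ℂ)
    (hψ : ∀ f : Fin n → Fin 2, ψ f = ∏ m, φ m (restrictB (consecBlock n r m) f)) :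
    Mtot (pureDensity ψ) = ∑ m, Mtot (pureDensity (φ m)) := by
  unfold Mtot
  refine final_sum' r hsum _ _ ?_ ?_ _ ?_ _ ?_
  · intro ma mb hne a b ha hb
    exact (Mkl_congr _ _ _ _ _ _ _).trans
      (Mkl_cross r hsum φ hpb ψ hψ hne a b ha hb)
  · intro m a b ha hb
    exact (Mkl_congr _ _ _ _ _ _ _).trans
      ((Mkl_same r hsum φ hunit ψ hψ m a b ha hb).trans (Mkl_congr _ _ _ _ _ _ _))
  · intro p
    simp only [Finset.mem_filter, Finset.mem_univ, true_and]
  · intro m p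
    simp only [Finset.mem_filter, Finset.mem_univ, true_and]
    exact Subtype.coe_lt_coe.symm
end

section
/- Bipartite correlations of Dicke states (Eq. 23): Let n ≥ 3 be odd and let 0 ≤ e ≤ n. The Dicke state |D_n^e⟩ satisfies the preferred-basis condition (all transverse single-qubit Bloch components vanish), and M(ρ_{D_n^e}) = Σ_{1≤k<l≤n} Σ_{i,j∈{1,2}} (T^{kl}_{ij})² = 4 e² (n-e)² / (n(n-1)). -/
/-- The Dicke state `|D_n^e⟩`: equal superposition of all computational basis
states of Hamming weight `e`. -/
noncomputable def dicke (n e : ℕ) : (Fin n → Fin 2) → ℂ :=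
  fun f => if (∑ k, ((f k : ℕ))) = e then (((Real.sqrt (n.choose e))⁻¹ : ℝ) : ℂ) else 0


open Finset

lemma fin2 (a : Fin 2) : a = 0 ∨ a = 1 := by omega

lemma weight_eq_card {ι : Type*} [Fintype ι] [DecidableEq ι] (x : ι → Fin 2) :
    (∑ q, ((x q : ℕ))) = (Finset.univ.filter (fun q => x q = 1)).card := by
  have : ∀ q : ι, ((x q : ℕ)) = if x q = 1 then 1 else 0 := by
    intro q; rcases fin2 (x q) with h | h <;> simp [h]
  rw [Finset.sum_congr rfl (fun q _ => this q), Finset.sum_boole, Nat.cast_id]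

lemma count_weight {ι : Type*} [Fintype ι] [DecidableEq ι] (m : ℕ) :
    (Finset.univ.filter (fun x : ι → Fin 2 => (∑ q, ((x q : ℕ))) = m)).card
      = (Fintype.card ι).choose m := by
  rw [← Finset.card_univ, ← Finset.card_powersetCard m (Finset.univ : Finset ι)]
  apply Finset.card_nbij' (fun x => Finset.univ.filter (fun q => x q = 1))
    (fun s => fun q => if q ∈ s then 1 else 0)
  · intro x hx
    simp only [Finset.mem_coe, Finset.mem_filter, Finset.mem_univ, true_and] at hx
    rw [Finset.mem_coe, Finset.mem_powersetCard_univ, ← weight_eq_card, hx]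
  · intro s hs
    rw [Finset.mem_coe, Finset.mem_powersetCard_univ] at hs
    simp only [Finset.mem_coe, Finset.mem_filter, Finset.mem_univ, true_and]
    rw [weight_eq_card, ← hs]
    congr 1
    ext q
    simp
  · intro x _
    funext q
    rcases fin2 (x q) with h | h <;> simp [h]
  · intro s _
    ext q
    simp
open Finset

def Eset {n : ℕ} (k l : Fin n) : Finset (Fin n) := (Finset.univ.erase k).erase l

lemma sum_split {n : ℕ} (k l : Fin n) (hkl : k ≠ l) (g : Fin n → ℕ) :
    ∑ q, g q = g k + (g l + ∑ q ∈ Eset k l, g q) := by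
  rw [← Finset.add_sum_erase _ _ (Finset.mem_univ k)]
  congr 1
  rw [← Finset.add_sum_erase _ _ (Finset.mem_erase.mpr ⟨Ne.symm hkl, Finset.mem_univ l⟩)]
  rfl

lemma card_E {n : ℕ} (k l : Fin n) (hkl : k ≠ l) : (Eset k l).card = n - 2 := by
  rw [Eset, Finset.card_erase_of_mem (Finset.mem_erase.mpr ⟨Ne.symm hkl, Finset.mem_univ l⟩),
    Finset.card_erase_of_mem (Finset.mem_univ k), Finset.card_univ, Fintype.card_fin]
  omega

lemma mem_E {n : ℕ} {k l q : Fin n} : q ∈ Eset k l ↔ q ≠ l ∧ q ≠ k := by simp [Eset]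

lemma card_S {n : ℕ} (k l : Fin n) (hkl : k ≠ l) (a b : Fin 2) (m : ℕ) :
    (Finset.univ.filter (fun x : Fin n → Fin 2 =>
        (∑ q, ((x q : ℕ))) = (a : ℕ) + (b : ℕ) + m ∧ x k = a ∧ x l = b)).card
      = (n - 2).choose m := by
  classical
  have hk' : k ∉ Eset k l := by simp [mem_E]
  have hl' : l ∉ Eset k l := by simp [mem_E]
  have hcard : Fintype.card {q // q ∈ Eset k l} = n - 2 := by
    rw [Fintype.card_coe]; exact card_E k l hkl
  rw [← hcard, ← count_weight m]
  apply Finset.card_nbij' (fun x => fun q : {q // q ∈ Eset k l} => x q.val)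
    (fun g => fun q => if h : q ∈ Eset k l then g ⟨q, h⟩ else if q = k then a else b)
  · intro x hx
    simp only [Finset.mem_coe, Finset.mem_filter, Finset.mem_univ, true_and] at hx ⊢
    obtain ⟨hsum, hk, hl⟩ := hx
    have h1 := sum_split k l hkl (fun q => ((x q : ℕ)))
    rw [hk, hl] at h1
    have h2 : ∑ q ∈ Eset k l, ((x q : ℕ)) = m := by omega
    rw [← h2, Finset.univ_eq_attach, Finset.sum_attach (Eset k l) (fun q => ((x q : ℕ)))]
  · intro g hg
    simp only [Finset.mem_coe, Finset.mem_filter, Finset.mem_univ, true_and] at hg ⊢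
    set f : Fin n → ℕ :=
      fun q => (((if h : q ∈ Eset k l then g ⟨q, h⟩ else if q = k then a else b) : Fin 2) : ℕ) with hf
    have e1 : f k = (a : ℕ) := by simp [hf, hk']
    have e2 : f l = (b : ℕ) := by simp [hf, hl', Ne.symm hkl]
    have e3 : ∑ q ∈ Eset k l, f q = m := by
      rw [← Finset.sum_attach (Eset k l) f, ← hg, Finset.univ_eq_attach]
      apply Finset.sum_congr rfl
      intro q _
      simp [hf, dif_pos q.2]
    refine ⟨?_, by simp [hk'], by simp [hl', Ne.symm hkl]⟩
    have h1 : ∑ q, f q = (a : ℕ) + (b : ℕ) + m := by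
      rw [sum_split k l hkl f, e1, e2, e3]; omega
    exact h1
  · intro x hx
    simp only [Finset.mem_coe, Finset.mem_filter, Finset.mem_univ, true_and] at hx
    funext q
    beta_reduce
    by_cases h : q ∈ Eset k l
    · rw [dif_pos h]
    · rw [dif_neg h]
      rw [mem_E] at h
      push_neg at h
      by_cases hqk : q = k
      · rw [if_pos hqk, hqk, hx.2.1]
      · have hql : q = l := by by_contra hq; exact hqk (h hq)
        rw [if_neg hqk, hql, hx.2.2]
  · intro g _
    funext q
    simp only
    rw [dif_pos q.2]
lemma pauli_diag {i : ℕ} (hi : i = 1 ∨ i = 2) (a : Fin 2) : pauli i a a = 0 := by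
  rcases hi with rfl | rfl <;> fin_cases a <;> simp [pauli]

lemma pauli_1_10 : pauli 1 1 0 = 1 := by simp [pauli]
lemma pauli_1_01 : pauli 1 0 1 = 1 := by simp [pauli]
lemma pauli_2_10 : pauli 2 1 0 = Complex.I := by simp [pauli]
lemma pauli_2_01 : pauli 2 0 1 = -Complex.I := by simp [pauli]

lemma fin2_add_one_ne (a : Fin 2) : a + 1 ≠ a := by omega
lemma fin2_ne_iff (a b : Fin 2) : a ≠ b ↔ a = b + 1 := by omega

lemma kronOp_pair {n : ℕ} (k l : Fin n) (hkl : k ≠ l) (i j : ℕ) (x y : Fin n → Fin 2) :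
    kronOp (fun q => if q = k then i else if q = l then j else 0) y x
      = pauli i (y k) (x k) * (pauli j (y l) (x l)
          * ∏ q ∈ Eset k l, (if y q = x q then (1 : ℂ) else 0)) := by
  show (∏ q, pauli (if q = k then i else if q = l then j else 0) (y q) (x q)) = _
  rw [← Finset.mul_prod_erase _ _ (Finset.mem_univ k),
    ← Finset.mul_prod_erase _ _ (Finset.mem_erase.mpr ⟨Ne.symm hkl, Finset.mem_univ l⟩)]
  congr 1
  · simp
  congr 1
  · simp [Ne.symm hkl]
  · apply Finset.prod_congr rfl
    intro q hq
    obtain ⟨h1, h2⟩ := mem_E.mp hq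
    rw [if_neg h2, if_neg h1]
    show (1 : Matrix (Fin 2) (Fin 2) ℂ) (y q) (x q) = _
    rw [Matrix.one_apply]

lemma kronOp_single {n : ℕ} (q0 : Fin n) (i : ℕ) (x y : Fin n → Fin 2) :
    kronOp (fun p => if p = q0 then i else 0) y x
      = pauli i (y q0) (x q0) * ∏ p ∈ Finset.univ.erase q0, (if y p = x p then (1 : ℂ) else 0) := by
  show (∏ q, pauli (if q = q0 then i else 0) (y q) (x q)) = _
  rw [← Finset.mul_prod_erase _ _ (Finset.mem_univ q0)]
  congr 1
  · simp
  · apply Finset.prod_congr rfl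
    intro q hq
    rw [if_neg (Finset.mem_erase.mp hq).1]
    show (1 : Matrix (Fin 2) (Fin 2) ℂ) (y q) (x q) = _
    rw [Matrix.one_apply]

lemma trace_mul_expand {ι : Type*} [Fintype ι] [DecidableEq ι] (ψ : (ι → Fin 2) → ℂ)
    (A : Matrix (ι → Fin 2) (ι → Fin 2) ℂ) :
    (pureDensity ψ * A).trace = ∑ x, ∑ y, ψ x * (starRingEnd ℂ) (ψ y) * A y x := by
  simp [Matrix.trace, Matrix.mul_apply, pureDensity, Matrix.diag]
def flipf {n : ℕ} (k l : Fin n) (x : Fin n → Fin 2) : Fin n → Fin 2 :=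
  fun q => if q = k then x k + 1 else if q = l then x l + 1 else x q

lemma flipf_k {n : ℕ} (k l : Fin n) (x : Fin n → Fin 2) : flipf k l x k = x k + 1 := by
  simp [flipf]

lemma flipf_l {n : ℕ} (k l : Fin n) (hkl : k ≠ l) (x : Fin n → Fin 2) :
    flipf k l x l = x l + 1 := by
  simp [flipf, Ne.symm hkl]

lemma flipf_E {n : ℕ} (k l : Fin n) (x : Fin n → Fin 2) {q : Fin n} (hq : q ∈ Eset k l) :
    flipf k l x q = x q := by
  obtain ⟨h1, h2⟩ := mem_E.mp hq
  simp [flipf, h1, h2]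

lemma fin2_resolve (a b : Fin 2) (h : a ≠ b + 1) : a = b := by omega

lemma bloch_dicke (n e : ℕ) (q0 : Fin n) {i : ℕ} (hi : i = 1 ∨ i = 2) :
    bloch (pureDensity (dicke n e)) q0 i = 0 := by
  rw [bloch, trace_mul_expand]
  have : (∑ x, ∑ y, dicke n e x * (starRingEnd ℂ) (dicke n e y)
      * kronOp (fun p => if p = q0 then i else 0) y x) = 0 := by
    apply Finset.sum_eq_zero; intro x _
    apply Finset.sum_eq_zero; intro y _
    rw [kronOp_single]
    by_cases hall : ∀ p ∈ Finset.univ.erase q0, y p = x p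
    · by_cases hq : y q0 = x q0
      · rw [hq, pauli_diag hi]; ring
      · have hx1 := (Finset.add_sum_erase Finset.univ (fun p => ((x p : ℕ))) (Finset.mem_univ q0)).symm
        have hy1 := (Finset.add_sum_erase Finset.univ (fun p => ((y p : ℕ))) (Finset.mem_univ q0)).symm
        have htail : ∑ p ∈ Finset.univ.erase q0, ((y p : ℕ)) = ∑ p ∈ Finset.univ.erase q0, ((x p : ℕ)) :=
          Finset.sum_congr rfl fun p hp => by rw [hall p hp]
        have hvals : ((y q0 : ℕ)) ≠ ((x q0 : ℕ)) := fun h => hq (Fin.val_injective h)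
        have hne : ¬((∑ p, ((x p : ℕ))) = e ∧ (∑ p, ((y p : ℕ))) = e) := by
          rintro ⟨h1, h2⟩
          rw [hx1] at h1; rw [hy1, htail] at h2
          omega
        rcases not_and_or.mp hne with h | h
        · simp only [dicke]; rw [if_neg h]; ring
        · simp only [dicke]; rw [if_neg h]; simp
    · push_neg at hall
      obtain ⟨p, hp, hyp⟩ := hall
      have hz : (∏ p ∈ Finset.univ.erase q0, if y p = x p then (1 : ℂ) else 0) = 0 :=
        Finset.prod_eq_zero hp (if_neg hyp)
      rw [hz]; ring
  rw [this]
  simp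
lemma fin2_01 : (0 : Fin 2) + 1 = 1 := rfl
lemma fin2_10 : (1 : Fin 2) + 1 = 0 := rfl

lemma trace_corr (n e : ℕ) (k l : Fin n) (hkl : k ≠ l) {i j : ℕ}
    (hi : i = 1 ∨ i = 2) (hj : j = 1 ∨ j = 2) :
    (pureDensity (dicke n e) * kronOp (fun q => if q = k then i else if q = l then j else 0)).trace
      = ((((Real.sqrt (n.choose e))⁻¹ : ℝ) : ℂ)) ^ 2 *
        ((((Finset.univ.filter (fun x : Fin n → Fin 2 =>
              (∑ q, ((x q : ℕ))) = e ∧ x k = 0 ∧ x l = 1)).card : ℕ) : ℂ)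
            * (pauli i 1 0 * pauli j 0 1)
        + (((Finset.univ.filter (fun x : Fin n → Fin 2 =>
              (∑ q, ((x q : ℕ))) = e ∧ x k = 1 ∧ x l = 0)).card : ℕ) : ℂ)
            * (pauli i 0 1 * pauli j 1 0)) := by
  rw [trace_mul_expand]
  set c : ℝ := (Real.sqrt (n.choose e))⁻¹ with hc
  have hstep : ∀ x : Fin n → Fin 2,
      (∑ y, dicke n e x * (starRingEnd ℂ) (dicke n e y)
        * kronOp (fun q => if q = k then i else if q = l then j else 0) y x)
      = (if ((∑ q, ((x q : ℕ))) = e ∧ x k = 0 ∧ x l = 1)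
            then ((c : ℂ)) ^ 2 * (pauli i 1 0 * pauli j 0 1) else 0)
        + (if ((∑ q, ((x q : ℕ))) = e ∧ x k = 1 ∧ x l = 0)
            then ((c : ℂ)) ^ 2 * (pauli i 0 1 * pauli j 1 0) else 0) := by
    intro x
    rw [Finset.sum_eq_single (flipf k l x)]
    · -- main computation
      rw [kronOp_pair k l hkl, flipf_k, flipf_l k l hkl]
      have hprod : (∏ q ∈ Eset k l, if flipf k l x q = x q then (1 : ℂ) else 0) = 1 :=
        Finset.prod_eq_one fun q hq => if_pos (flipf_E k l x hq)
      rw [hprod, mul_one]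
      have hsx := sum_split k l hkl (fun q => ((x q : ℕ)))
      have hsf := sum_split k l hkl (fun q => ((flipf k l x q : ℕ)))
      have htail : ∑ q ∈ Eset k l, ((flipf k l x q : ℕ)) = ∑ q ∈ Eset k l, ((x q : ℕ)) :=
        Finset.sum_congr rfl fun q hq => by rw [flipf_E k l x hq]
      rw [flipf_k, flipf_l k l hkl, htail] at hsf
      by_cases hwx : (∑ q, ((x q : ℕ))) = e
      · rcases fin2 (x k) with hk | hk <;> rcases fin2 (x l) with hl | hl
        · -- (0,0): flip weight = e + 2
          have hwf : (∑ q, ((flipf k l x q : ℕ))) ≠ e := by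
            rw [hk] at hsx hsf; rw [hl] at hsx hsf
            norm_num at hsx hsf
            omega
          simp only [dicke]
          rw [if_neg hwf, hk, hl]
          simp [hwx]
        · -- (0,1)
          have hwf : (∑ q, ((flipf k l x q : ℕ))) = e := by
            rw [hk] at hsx hsf; rw [hl] at hsx hsf
            norm_num at hsx hsf
            omega
          simp only [dicke, hk, hl, hwx, hwf, fin2_01, fin2_10, if_true,
            Complex.conj_ofReal]
          norm_num
          left; norm_cast; rw [hc]; ring
        · -- (1,0)
          have hwf : (∑ q, ((flipf k l x q : ℕ))) = e := by
            rw [hk] at hsx hsf; rw [hl] at hsx hsf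
            norm_num at hsx hsf
            omega
          simp only [dicke, hk, hl, hwx, hwf, fin2_01, fin2_10, if_true,
            Complex.conj_ofReal]
          norm_num
          left; norm_cast; rw [hc]; ring
        · -- (1,1)
          have hwf : (∑ q, ((flipf k l x q : ℕ))) ≠ e := by
            rw [hk] at hsx hsf; rw [hl] at hsx hsf
            norm_num at hsx hsf
            omega
          simp only [dicke]
          rw [if_neg hwf, hk, hl]
          simp [hwx]
      · simp only [dicke]
        have r1 : ¬((∑ q, ((x q : ℕ))) = e ∧ x k = 0 ∧ x l = 1) := fun h => hwx h.1
        have r2 : ¬((∑ q, ((x q : ℕ))) = e ∧ x k = 1 ∧ x l = 0) := fun h => hwx h.1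
        rw [if_neg hwx, if_neg r1, if_neg r2]
        ring
    · -- other y give 0
      intro y _ hy
      rw [kronOp_pair k l hkl]
      have hex : ∃ q, y q ≠ flipf k l x q := by
        by_contra h; push_neg at h; exact hy (funext h)
      obtain ⟨q, hq⟩ := hex
      by_cases hqk : q = k
      · rw [hqk, flipf_k] at hq
        rw [fin2_resolve _ _ hq, pauli_diag hi]
        ring
      · by_cases hql : q = l
        · rw [hql, flipf_l k l hkl] at hq
          rw [fin2_resolve _ _ hq, pauli_diag hj]
          ring
        · have hqE : q ∈ Eset k l := mem_E.mpr ⟨hql, hqk⟩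
          rw [flipf_E k l x hqE] at hq
          have hz : (∏ q ∈ Eset k l, if y q = x q then (1 : ℂ) else 0) = 0 :=
            Finset.prod_eq_zero hqE (if_neg hq)
          rw [hz]; ring
    · intro h; exact absurd (Finset.mem_univ _) h
  rw [Finset.sum_congr rfl (fun x _ => hstep x), Finset.sum_add_distrib]
  rw [← Finset.sum_filter, ← Finset.sum_filter, Finset.sum_const, Finset.sum_const]
  simp only [nsmul_eq_mul]
  ring
lemma card01 (n e : ℕ) (k l : Fin n) (hkl : k ≠ l) :
    (Finset.univ.filter (fun x : Fin n → Fin 2 =>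
        (∑ q, ((x q : ℕ))) = e ∧ x k = 0 ∧ x l = 1)).card
      = if e = 0 then 0 else (n - 2).choose (e - 1) := by
  by_cases he0 : e = 0
  · rw [if_pos he0, Finset.card_eq_zero, Finset.filter_eq_empty_iff]
    rintro x - ⟨hs, hk, hl⟩
    have := (Finset.sum_eq_zero_iff.mp (he0 ▸ hs)) l (Finset.mem_univ l)
    rw [hl] at this
    simp at this
  · rw [if_neg he0]
    have hval : ((0 : Fin 2) : ℕ) + ((1 : Fin 2) : ℕ) + (e - 1) = e := by simp; omega
    have := card_S k l hkl 0 1 (e - 1)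
    rw [hval] at this
    exact this

lemma card10 (n e : ℕ) (k l : Fin n) (hkl : k ≠ l) :
    (Finset.univ.filter (fun x : Fin n → Fin 2 =>
        (∑ q, ((x q : ℕ))) = e ∧ x k = 1 ∧ x l = 0)).card
      = if e = 0 then 0 else (n - 2).choose (e - 1) := by
  by_cases he0 : e = 0
  · rw [if_pos he0, Finset.card_eq_zero, Finset.filter_eq_empty_iff]
    rintro x - ⟨hs, hk, hl⟩
    have := (Finset.sum_eq_zero_iff.mp (he0 ▸ hs)) k (Finset.mem_univ k)
    rw [hk] at this
    simp at this
  · rw [if_neg he0]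
    have hval : ((1 : Fin 2) : ℕ) + ((0 : Fin 2) : ℕ) + (e - 1) = e := by simp; omega
    have := card_S k l hkl 1 0 (e - 1)
    rw [hval] at this
    exact this

lemma natA (n e : ℕ) (hn : 1 ≤ n) (he : 1 ≤ e) :
    e * n.choose e = n * (n - 1).choose (e - 1) := by
  obtain ⟨n', rfl⟩ : ∃ n', n = n' + 1 := ⟨n - 1, by omega⟩
  obtain ⟨e', rfl⟩ : ∃ e', e = e' + 1 := ⟨e - 1, by omega⟩
  have := Nat.add_one_mul_choose_eq n' e'
  simp only [Nat.add_sub_cancel]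
  rw [this, mul_comm]

lemma natB (n e : ℕ) (he : e ≤ n) :
    (n - e) * n.choose e = n * (n - 1).choose e := by
  rcases eq_or_lt_of_le he with rfl | hlt
  · rcases Nat.eq_zero_or_pos e with rfl | hpos
    · simp
    · rw [Nat.sub_self, zero_mul, Nat.choose_eq_zero_of_lt (by omega : e - 1 < e), mul_zero]
  · have h1 : 1 ≤ n - e := by omega
    have h2 : n - e ≤ n := by omega
    have hA := natA n (n - e) (by omega) h1
    rw [Nat.choose_symm he] at hA
    rw [show n - e - 1 = n - 1 - e from by omega] at hA
    rw [Nat.choose_symm (by omega : e ≤ n - 1)] at hA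
    exact hA

lemma keyid (n e : ℕ) (hn : 2 ≤ n) (he1 : 1 ≤ e) (he : e ≤ n) :
    n * (n - 1) * (n - 2).choose (e - 1) = e * (n - e) * n.choose e := by
  have hA := natA n e (by omega) he1
  have hB := natB (n - 1) (e - 1) (by omega)
  rw [show n - 1 - (e - 1) = n - e from by omega, show n - 1 - 1 = n - 2 from by omega] at hB
  calc n * (n - 1) * (n - 2).choose (e - 1)
      = n * ((n - 1) * (n - 2).choose (e - 1)) := by ring
    _ = n * ((n - e) * (n - 1).choose (e - 1)) := by rw [← hB]
    _ = (n - e) * (n * (n - 1).choose (e - 1)) := by ring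
    _ = (n - e) * (e * n.choose e) := by rw [← hA]
    _ = e * (n - e) * n.choose e := by ring

lemma card_pairs (n : ℕ) :
    2 * (Finset.univ.filter (fun p : Fin n × Fin n => p.1 < p.2)).card = n * n - n := by
  classical
  have hswap : (Finset.univ.filter (fun p : Fin n × Fin n => p.1 < p.2)).card
      = (Finset.univ.filter (fun p : Fin n × Fin n => p.2 < p.1)).card := by
    apply Finset.card_nbij' Prod.swap Prod.swap <;> intro p <;> simp [Finset.mem_filter]
  have hdisj : Disjoint (Finset.univ.filter (fun p : Fin n × Fin n => p.1 < p.2))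
      (Finset.univ.filter (fun p : Fin n × Fin n => p.2 < p.1)) := by
    rw [Finset.disjoint_left]
    intro p h1 h2
    simp only [Finset.mem_filter] at h1 h2
    exact absurd h2.2 (lt_asymm h1.2)
  have hunion : (Finset.univ.filter (fun p : Fin n × Fin n => p.1 < p.2))
      ∪ (Finset.univ.filter (fun p : Fin n × Fin n => p.2 < p.1))
      = (Finset.univ : Finset (Fin n)).offDiag := by
    ext p
    rw [Finset.mem_union, Finset.mem_filter, Finset.mem_filter, Finset.mem_offDiag]
    constructor
    · rintro (⟨-, h⟩ | ⟨-, h⟩)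
      · exact ⟨Finset.mem_univ _, Finset.mem_univ _, ne_of_lt h⟩
      · exact ⟨Finset.mem_univ _, Finset.mem_univ _, ne_of_gt h⟩
    · rintro ⟨-, -, h⟩
      rcases lt_or_gt_of_ne h with h | h
      · exact Or.inl ⟨Finset.mem_univ _, h⟩
      · exact Or.inr ⟨Finset.mem_univ _, h⟩
  have := Finset.card_union_of_disjoint hdisj
  rw [hunion, Finset.offDiag_card, Finset.card_univ, Fintype.card_fin] at this
  omega
lemma corr11 (n e : ℕ) (k l : Fin n) (hkl : k ≠ l) :
    corr (pureDensity (dicke n e)) k l 1 1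
      = 2 * (((if e = 0 then 0 else (n - 2).choose (e - 1) : ℕ)) : ℝ)
          * ((Real.sqrt (n.choose e))⁻¹) ^ 2 := by
  rw [corr, trace_corr n e k l hkl (Or.inl rfl) (Or.inl rfl),
    card01 n e k l hkl, card10 n e k l hkl, pauli_1_10, pauli_1_01]
  set D := (if e = 0 then 0 else (n - 2).choose (e - 1) : ℕ) with hD
  have : ((((Real.sqrt (n.choose e))⁻¹ : ℝ) : ℂ)) ^ 2 *
      ((D : ℂ) * (1 * 1)
        + (D : ℂ) * (1 * 1))
      = (((2 * ((D : ℕ) : ℝ)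
          * ((Real.sqrt (n.choose e))⁻¹) ^ 2 : ℝ)) : ℂ) := by
    push_cast; ring
  rw [this, Complex.ofReal_re]

lemma corr22 (n e : ℕ) (k l : Fin n) (hkl : k ≠ l) :
    corr (pureDensity (dicke n e)) k l 2 2
      = 2 * (((if e = 0 then 0 else (n - 2).choose (e - 1) : ℕ)) : ℝ)
          * ((Real.sqrt (n.choose e))⁻¹) ^ 2 := by
  rw [corr, trace_corr n e k l hkl (Or.inr rfl) (Or.inr rfl),
    card01 n e k l hkl, card10 n e k l hkl, pauli_2_10, pauli_2_01]
  set D := (if e = 0 then 0 else (n - 2).choose (e - 1) : ℕ) with hD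
  have hI1 : Complex.I * -Complex.I = 1 := by rw [mul_neg, Complex.I_mul_I, neg_neg]
  have hI2 : -Complex.I * Complex.I = 1 := by rw [neg_mul, Complex.I_mul_I, neg_neg]
  have : ((((Real.sqrt (n.choose e))⁻¹ : ℝ) : ℂ)) ^ 2 *
      ((D : ℂ) * (Complex.I * -Complex.I)
        + (D : ℂ) * (-Complex.I * Complex.I))
      = (((2 * ((D : ℕ) : ℝ)
          * ((Real.sqrt (n.choose e))⁻¹) ^ 2 : ℝ)) : ℂ) := by
    rw [hI1, hI2]
    push_cast; ring
  rw [this, Complex.ofReal_re]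

lemma corr12 (n e : ℕ) (k l : Fin n) (hkl : k ≠ l) :
    corr (pureDensity (dicke n e)) k l 1 2 = 0 := by
  rw [corr, trace_corr n e k l hkl (Or.inl rfl) (Or.inr rfl),
    card01 n e k l hkl, card10 n e k l hkl, pauli_1_10, pauli_1_01, pauli_2_10, pauli_2_01]
  set D := (if e = 0 then 0 else (n - 2).choose (e - 1) : ℕ) with hD
  have : ((((Real.sqrt (n.choose e))⁻¹ : ℝ) : ℂ)) ^ 2 *
      ((D : ℂ) * (1 * -Complex.I)
        + (D : ℂ) * (1 * Complex.I)) = 0 := by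
    ring
  rw [this, Complex.zero_re]

lemma corr21 (n e : ℕ) (k l : Fin n) (hkl : k ≠ l) :
    corr (pureDensity (dicke n e)) k l 2 1 = 0 := by
  rw [corr, trace_corr n e k l hkl (Or.inr rfl) (Or.inl rfl),
    card01 n e k l hkl, card10 n e k l hkl, pauli_1_10, pauli_1_01, pauli_2_10, pauli_2_01]
  set D := (if e = 0 then 0 else (n - 2).choose (e - 1) : ℕ) with hD
  have : ((((Real.sqrt (n.choose e))⁻¹ : ℝ) : ℂ)) ^ 2 *
      ((D : ℂ) * (Complex.I * 1)
        + (D : ℂ) * (-Complex.I * 1)) = 0 := by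
    ring
  rw [this, Complex.zero_re]

lemma Mkl_dicke (n e : ℕ) (k l : Fin n) (hkl : k ≠ l) :
    Mkl (pureDensity (dicke n e)) k l
      = 2 * (2 * (((if e = 0 then 0 else (n - 2).choose (e - 1) : ℕ)) : ℝ)
          * ((Real.sqrt (n.choose e))⁻¹) ^ 2) ^ 2 := by
  have hIcc : Finset.Icc 1 2 = ({1, 2} : Finset ℕ) := rfl
  rw [Mkl, hIcc]
  rw [Finset.sum_insert (by decide), Finset.sum_singleton,
    Finset.sum_insert (by decide), Finset.sum_singleton,
    Finset.sum_insert (by decide), Finset.sum_singleton]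
  rw [corr11 n e k l hkl, corr12 n e k l hkl, corr21 n e k l hkl, corr22 n e k l hkl]
  ring
set_option maxHeartbeats 2000000 in
/-- Eq. 23: for odd `n ≥ 3` and `0 ≤ e ≤ n`, the Dicke state
`|D_n^e⟩` satisfies the preferred-basis condition and
`M(ρ_{D_n^e}) = 4 e² (n-e)² / (n(n-1))`. -/
theorem Mtot_dicke (n e : ℕ) (hn : 3 ≤ n) (hodd : Odd n) (he : e ≤ n) :
    PreferredBasis (pureDensity (dicke n e)) ∧
      Mtot (pureDensity (dicke n e))
        = 4 * (e : ℝ) ^ 2 * ((n : ℝ) - (e : ℝ)) ^ 2 / ((n : ℝ) * ((n : ℝ) - 1)) := by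
  have hn2 : 2 ≤ n := by omega
  refine ⟨fun q => ⟨bloch_dicke n e q (Or.inl rfl), bloch_dicke n e q (Or.inr rfl)⟩, ?_⟩
  have key : (∑ p ∈ Finset.univ.filter (fun p : Fin n × Fin n => p.1 < p.2),
      Mkl (pureDensity (dicke n e)) p.1 p.2)
      = 4 * (e : ℝ) ^ 2 * ((n : ℝ) - (e : ℝ)) ^ 2 / ((n : ℝ) * ((n : ℝ) - 1)) := by
    set D := (if e = 0 then 0 else (n - 2).choose (e - 1) : ℕ) with hD
    set C := n.choose e with hC
    have hM : ∀ p ∈ Finset.univ.filter (fun p : Fin n × Fin n => p.1 < p.2),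
        Mkl (pureDensity (dicke n e)) p.1 p.2
          = 2 * (2 * ((D : ℕ) : ℝ) * ((Real.sqrt C)⁻¹) ^ 2) ^ 2 := by
      intro p hp
      exact Mkl_dicke n e p.1 p.2 (ne_of_lt (Finset.mem_filter.mp hp).2)
    rw [Finset.sum_congr rfl hM, Finset.sum_const, nsmul_eq_mul]
    have hCpos : 0 < C := Nat.choose_pos he
    have hC0 : ((C : ℕ) : ℝ) ≠ 0 := Nat.cast_ne_zero.mpr hCpos.ne'
    have hnR : (3 : ℝ) ≤ (n : ℝ) := by exact_mod_cast hn
    have hnn : (n : ℝ) * ((n : ℝ) - 1) ≠ 0 := by nlinarith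
    have hsq : ((Real.sqrt C)⁻¹) ^ 2 = ((C : ℕ) : ℝ)⁻¹ := by
      rw [inv_pow, Real.sq_sqrt (by positivity)]
    have hkey : ((D : ℕ) : ℝ) * ((n : ℝ) * ((n : ℝ) - 1))
        = (e : ℝ) * ((n : ℝ) - (e : ℝ)) * ((C : ℕ) : ℝ) := by
      by_cases he0 : e = 0
      · rw [hD, if_pos he0, he0]
        simp
      · have hid := keyid n e hn2 (by omega) he
        have hcast : ((n * (n - 1) * (n - 2).choose (e - 1) : ℕ) : ℝ)
            = ((e * (n - e) * C : ℕ) : ℝ) := by exact_mod_cast congrArg (fun t : ℕ => (t : ℝ)) hid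
        push_cast [Nat.cast_sub (by omega : 1 ≤ n), Nat.cast_sub he] at hcast
        rw [hD, if_neg he0]
        push_cast
        linear_combination hcast
    have hcard : (((Finset.univ.filter (fun p : Fin n × Fin n => p.1 < p.2)).card : ℕ) : ℝ) * 2
        = (n : ℝ) * ((n : ℝ) - 1) := by
      have h := card_pairs n
      have hcast : ((2 * (Finset.univ.filter (fun p : Fin n × Fin n => p.1 < p.2)).card : ℕ) : ℝ)
          = ((n * n - n : ℕ) : ℝ) := by exact_mod_cast congrArg (fun t : ℕ => (t : ℝ)) h
      push_cast [Nat.cast_sub (by nlinarith : n ≤ n * n)] at hcast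
      linear_combination hcast
    have hDval : ((D : ℕ) : ℝ)
        = (e : ℝ) * ((n : ℝ) - (e : ℝ)) * ((C : ℕ) : ℝ) / ((n : ℝ) * ((n : ℝ) - 1)) := by
      rw [eq_div_iff hnn]; exact hkey
    have hcardval : (((Finset.univ.filter (fun p : Fin n × Fin n => p.1 < p.2)).card : ℕ) : ℝ)
        = (n : ℝ) * ((n : ℝ) - 1) / 2 := by
      rw [eq_div_iff (two_ne_zero)]; exact hcard
    rw [hsq, hDval, hcardval]
    field_simp
    ring
  rw [Mtot]
  convert key using 2 <;> congr!
end

section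
/- Application to balanced Dicke states: Let n ≥ 5 be odd. The Dicke state |D_n^{(n-1)/2}⟩ is genuinely ((n+3)/2)-partite entangled: it cannot be written (over any partition of the n qubits into nonempty blocks) as a tensor product of pure states each involving at most (n+1)/2 qubits. -/
/-- `P` is a partition of `Fin n` into `k` nonempty blocks. -/
def IsPartition {n k : ℕ} (P : Fin k → Finset (Fin n)) : Prop :=
  (∀ m, (P m).Nonempty) ∧ (∀ m m', m ≠ m' → Disjoint (P m) (P m')) ∧
    ∀ q : Fin n, ∃ m, q ∈ P m

/-- `ψ` is the tensor product, under the canonical qubit-reordering isomorphism,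
of pure states on the blocks of `P`. -/
def IsProductOver {n k : ℕ} (ψ : (Fin n → Fin 2) → ℂ) (P : Fin k → Finset (Fin n)) : Prop :=
  ∃ φ : (m : Fin k) → ((↥(P m) → Fin 2) → ℂ),
    (∀ m, UnitVec (φ m)) ∧ ∀ f : Fin n → Fin 2, ψ f = ∏ m, φ m (restrictB (P m) f)

lemma weight_ind {n : ℕ} (p : Fin n → Prop) [DecidablePred p] :
    (∑ k : Fin n, (((if p k then (1 : Fin 2) else 0) : Fin 2) : ℕ))
      = (Finset.univ.filter p).card := by
  rw [Finset.card_filter]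
  exact Finset.sum_congr rfl (fun x _ => by split_ifs <;> rfl)

/-- for odd `n ≥ 5`, the balanced Dicke state `|D_n^{(n-1)/2}⟩`
is genuinely `((n+3)/2)`-partite entangled: it is not a product of pure states
over any partition of the qubits into blocks of size at most `(n+1)/2`. -/
theorem dicke_balanced_entanglement_depth (n : ℕ) (hn : 5 ≤ n) (hodd : Odd n) :
    ¬ ∃ (k : ℕ) (P : Fin k → Finset (Fin n)),
        IsPartition P ∧ (∀ b, (P b).card ≤ (n + 1) / 2) ∧
          IsProductOver (dicke n ((n - 1) / 2)) P := by
  rintro ⟨k, P, ⟨hne, hdisj, hcov⟩, hcard, φ, hunit, hprod⟩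
  obtain ⟨e, hne'⟩ : ∃ e, n = 2 * e + 1 := by
    obtain ⟨m, hm⟩ := hodd; exact ⟨m, by omega⟩
  have he2 : 2 ≤ e := by omega
  have hE : (n - 1) / 2 = e := by omega
  have hE' : (n + 1) / 2 = e + 1 := by omega
  rw [hE] at hprod
  have hq0 : (0 : ℕ) < n := by omega
  obtain ⟨m0, hqm0⟩ := hcov ⟨0, hq0⟩
  set q : Fin n := ⟨0, hq0⟩ with hqdef
  set S : Finset (Fin n) := P m0 with hS
  have hScard : S.card ≤ e + 1 := hE' ▸ hcard m0
  have hcompl : e ≤ Sᶜ.card := by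
    rw [Finset.card_compl, Fintype.card_fin]; omega
  obtain ⟨T₁, hT₁sub, hT₁card⟩ := Finset.exists_subset_card_eq
    (show e - 1 ≤ Sᶜ.card by omega)
  obtain ⟨T₂, hT₂sub, hT₂card⟩ := Finset.exists_subset_card_eq hcompl
  have hT₁S : ∀ x ∈ T₁, x ∉ S := fun x hx => Finset.mem_compl.mp (hT₁sub hx)
  have hT₂S : ∀ x ∈ T₂, x ∉ S := fun x hx => Finset.mem_compl.mp (hT₂sub hx)
  have hqT₁ : q ∉ T₁ := fun h => hT₁S q h hqm0
  have hqT₂ : q ∉ T₂ := fun h => hT₂S q h hqm0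
  -- the four strings
  set f : Fin n → Fin 2 := fun x => if x = q ∨ x ∈ T₁ then 1 else 0 with hf
  set g : Fin n → Fin 2 := fun x => if x ∈ T₂ then 1 else 0 with hg
  set h : Fin n → Fin 2 := fun x => if x = q ∨ x ∈ T₂ then 1 else 0 with hh
  set h' : Fin n → Fin 2 := fun x => if x ∈ T₁ then 1 else 0 with hh'
  -- weights
  have wf : (∑ k, ((f k : ℕ))) = e := by
    rw [hf]
    rw [weight_ind (fun x => x = q ∨ x ∈ T₁)]
    have : Finset.univ.filter (fun x => x = q ∨ x ∈ T₁) = insert q T₁ := by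
      ext x; simp [or_comm]
    rw [this, Finset.card_insert_of_notMem hqT₁, hT₁card]; omega
  have wg : (∑ k, ((g k : ℕ))) = e := by
    rw [hg, weight_ind (fun x => x ∈ T₂)]
    have : Finset.univ.filter (fun x => x ∈ T₂) = T₂ := by ext x; simp
    rw [this, hT₂card]
  have wh : (∑ k, ((h k : ℕ))) = e + 1 := by
    rw [hh, weight_ind (fun x => x = q ∨ x ∈ T₂)]
    have : Finset.univ.filter (fun x => x = q ∨ x ∈ T₂) = insert q T₂ := by
      ext x; simp [or_comm]
    rw [this, Finset.card_insert_of_notMem hqT₂, hT₂card]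
  -- restriction equalities
  have hfh : restrictB S f = restrictB S h := by
    funext x
    have hxS : (x : Fin n) ∈ S := x.2
    simp only [restrictB, hf, hh]
    have h1 : (x : Fin n) ∉ T₁ := fun hx => hT₁S _ hx hxS
    have h2 : (x : Fin n) ∉ T₂ := fun hx => hT₂S _ hx hxS
    simp [h1, h2]
  have hgh' : restrictB S g = restrictB S h' := by
    funext x
    have hxS : (x : Fin n) ∈ S := x.2
    simp only [restrictB, hg, hh']
    have h1 : (x : Fin n) ∉ T₁ := fun hx => hT₁S _ hx hxS
    have h2 : (x : Fin n) ∉ T₂ := fun hx => hT₂S _ hx hxS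
    simp [h1, h2]
  have hrest : ∀ m, m ≠ m0 →
      restrictB (P m) f = restrictB (P m) h' ∧ restrictB (P m) g = restrictB (P m) h := by
    intro m hm
    have hd : Disjoint (P m) S := hdisj m m0 hm
    constructor <;> funext x <;>
    · have hxS : (x : Fin n) ∉ S := fun hx => (Finset.disjoint_left.mp hd x.2) hx
      have hxq : (x : Fin n) ≠ q := fun hx => hxS (hx ▸ hqm0)
      simp [restrictB, hf, hg, hh, hh', hxq]
  -- key product identity
  have key : dicke n e f * dicke n e g = dicke n e h * dicke n e h' := by
    rw [hprod f, hprod g, hprod h, hprod h', ← Finset.prod_mul_distrib,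
      ← Finset.prod_mul_distrib]
    apply Finset.prod_congr rfl
    intro m _
    by_cases hm : m = m0
    · subst hm
      exact congrArg₂ (· * ·) (congrArg _ hfh) (congrArg _ hgh')
    · rw [(hrest m hm).1, (hrest m hm).2, mul_comm]
  -- contradiction
  have hpos : (0:ℝ) < Real.sqrt (n.choose e) := Real.sqrt_pos.mpr (by
    exact_mod_cast Nat.choose_pos (by omega : e ≤ n))
  have hcne : ((((Real.sqrt (n.choose e))⁻¹ : ℝ)) : ℂ) ≠ 0 :=
    Complex.ofReal_ne_zero.mpr (inv_ne_zero (ne_of_gt hpos))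
  have hc : dicke n e f ≠ 0 := by rw [dicke]; simp only [wf, if_pos rfl]; exact hcne
  have hcg : dicke n e g ≠ 0 := by rw [dicke]; simp only [wg, if_pos rfl]; exact hcne
  have hz : dicke n e h = 0 := by
    rw [dicke]; simp only [wh]; rw [if_neg (by omega)]
  rw [hz, zero_mul] at key
  exact mul_ne_zero hc hcg key
end

section
/- Genuine multipartite entanglement of D_3^1 and D_5^2: The three-qubit W state |D_3^1⟩ is genuinely 3-partite entangled (it is not a product of two pure states over any bipartition of its 3 qubits into two nonempty sets), and the five-qubit Dicke state |D_5^2⟩ is genuinely 5-partite entangled (it is not a product of two pure states over any bipartition of its 5 qubits into two nonempty sets). -/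
lemma wt {n : ℕ} (U : Finset (Fin n)) :
    (∑ k, (((if k ∈ U then 1 else 0 : Fin 2) : ℕ))) = U.card := by
  have : ∀ k : Fin n, (((if k ∈ U then 1 else 0 : Fin 2) : ℕ)) = if k ∈ U then 1 else 0 := by
    intro k; split <;> rfl
  simp only [this, Finset.sum_ite_mem, Finset.univ_inter, Finset.sum_const, smul_eq_mul, mul_one]

lemma not_product (n e : ℕ) (he : 1 ≤ e) (hen : e + 1 ≤ n) :
    ¬ ∃ P : Fin 2 → Finset (Fin n), IsPartition P ∧ IsProductOver (dicke n e) P := by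
  rintro ⟨P, ⟨hne, hdisj, -⟩, φ, -, hprod⟩
  obtain ⟨a, ha⟩ := hne 0
  obtain ⟨b, hb⟩ := hne 1
  have hd := hdisj 0 1 (by decide)
  have hab : a ≠ b := fun h => (Finset.disjoint_left.mp hd ha) (h ▸ hb)
  have hcard : e - 1 ≤ (Finset.univ \ {a, b} : Finset (Fin n)).card := by
    rw [Finset.card_sdiff_of_subset (Finset.subset_univ _), Finset.card_univ, Fintype.card_fin,
      Finset.card_pair hab]
    omega
  obtain ⟨T, hTsub, hT⟩ := Finset.exists_subset_card_eq hcard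
  have haT : a ∉ T := fun h => by simpa using (hTsub h)
  have hbT : b ∉ T := fun h => by simpa using (hTsub h)
  set F : Finset (Fin n) → (Fin n → Fin 2) :=
    fun U k => if k ∈ U then 1 else 0 with hF
  have hc : ((((Real.sqrt (n.choose e))⁻¹ : ℝ) : ℂ)) ≠ 0 := by
    rw [Complex.ofReal_ne_zero]
    refine inv_ne_zero (ne_of_gt (Real.sqrt_pos.mpr ?_))
    exact_mod_cast Nat.choose_pos (by omega)
  have hval : ∀ U : Finset (Fin n), dicke n e (F U) =
      if U.card = e then (((Real.sqrt (n.choose e))⁻¹ : ℝ) : ℂ) else 0 := by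
    intro U; unfold dicke; rw [wt U]
  have hins : (insert a (insert b T)) = insert b (insert a T) := Finset.insert_comm a b T
  have c10 : (insert a T).card = e := by
    rw [Finset.card_insert_of_notMem haT, hT]; omega
  have c01 : (insert b T).card = e := by
    rw [Finset.card_insert_of_notMem hbT, hT]; omega
  have c11 : (insert a (insert b T)).card = e + 1 := by
    rw [Finset.card_insert_of_notMem (by simp [haT, hab]), c01]
  -- restrictions agree
  have hr0 : restrictB (P 0) (F (insert a T)) = restrictB (P 0) (F (insert a (insert b T))) := by
    funext q
    have hqb : (q : Fin n) ≠ b := fun h => (Finset.disjoint_left.mp hd (h ▸ q.2)) hb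
    simp only [restrictB, hF, hins, Finset.mem_insert]
    simp [hqb]
  have hr1 : restrictB (P 1) (F (insert b T)) = restrictB (P 1) (F (insert a (insert b T))) := by
    funext q
    have hqa : (q : Fin n) ≠ a := fun h => (Finset.disjoint_left.mp hd ha) (h ▸ q.2)
    simp only [restrictB, hF, Finset.mem_insert]
    simp [hqa]
  have h10 := (hprod (F (insert a T))).symm
  have h01 := (hprod (F (insert b T))).symm
  have h11 := (hprod (F (insert a (insert b T)))).symm
  rw [Fin.prod_univ_two] at h10 h01 h11
  rw [hval, c10, if_pos rfl] at h10
  rw [hval, c01, if_pos rfl] at h01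
  rw [hval, c11, if_neg (by omega)] at h11
  rw [← hr0, ← hr1] at h11
  rcases mul_eq_zero.mp h11 with h | h
  · exact hc (by rw [← h10, h, zero_mul])
  · exact hc (by rw [← h01, h, mul_zero])


/-- the W state `|D_3^1⟩` is genuinely 3-partite entangled and
the Dicke state `|D_5^2⟩` is genuinely 5-partite entangled: neither is a
product of two pure states over any bipartition of its qubits. -/
theorem dicke_W_and_D52_genuinely_entangled :
    (¬ ∃ P : Fin 2 → Finset (Fin 3), IsPartition P ∧ IsProductOver (dicke 3 1) P) ∧
    (¬ ∃ P : Fin 2 → Finset (Fin 5), IsPartition P ∧ IsProductOver (dicke 5 2) P) :=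
  ⟨not_product 3 1 (by norm_num) (by norm_num), not_product 5 2 (by norm_num) (by norm_num)⟩
end
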